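/- arXiv:2507.20916 — 5 statements merged into one kernel-verified Lean document; each statement's English description precedes it below -/
import Mathlib

section
/- Let Ω ⊂ ℝⁿ be a bounded domain, f ∈ C²([0,1)), and let u ∈ C²(Ω) with 0 ≤ u < 1 solve −Δu = f(u) in Ω and satisfy the stability inequality ∫_Ω (|∇ξ|² − f′(u)ξ²) dx ≥ 0 for every Lipschitz function ξ with compact support in Ω. Then for every c ∈ C²(Ω) and every Lipschitz function η with compact support in Ω one has ∫_Ω (Δc + f′(u)c) c η² dx ≤ ∫_Ω c² |∇η|² dx. -/
open MeasureTheory Set Filter Topology Bornology Metric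

/-- The Laplacian of `u : ℝⁿ → ℝ`, as the sum of second partial derivatives. -/
noncomputable def lap {n : ℕ} (u : EuclideanSpace ℝ (Fin n) → ℝ)
    (x : EuclideanSpace ℝ (Fin n)) : ℝ :=
  ∑ i, fderiv ℝ (fun y => fderiv ℝ u y (EuclideanSpace.single i 1)) x (EuclideanSpace.single i 1)

/-- `f` is of class `C²([0,1))`, with first and second derivatives `f'`, `f''`. -/
def C2On01 (f f' f'' : ℝ → ℝ) : Prop :=
  (∀ t ∈ Ico (0:ℝ) 1, HasDerivWithinAt f (f' t) (Ico (0:ℝ) 1) t) ∧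
  (∀ t ∈ Ico (0:ℝ) 1, HasDerivWithinAt f' (f'' t) (Ico (0:ℝ) 1) t) ∧
  ContinuousOn f'' (Ico (0:ℝ) 1)

/-- Stability of a solution `u` of `-Δu = f(u)` in `Ω`: nonnegativity of the second variation of
the energy on all smooth test functions compactly supported in `Ω`. Here `f'` is the derivative
of the nonlinearity. -/
def StableSol {n : ℕ} (f' : ℝ → ℝ) (u : EuclideanSpace ℝ (Fin n) → ℝ)
    (Ω : Set (EuclideanSpace ℝ (Fin n))) : Prop :=
  ∀ ξ : EuclideanSpace ℝ (Fin n) → ℝ, ContDiff ℝ (⊤:ℕ∞) ξ → HasCompactSupport ξ →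
    tsupport ξ ⊆ Ω →
    0 ≤ ∫ x in Ω, (‖gradient ξ x‖ ^ 2 - f' (u x) * ξ x ^ 2)

open scoped NNReal RealInnerProductSpace Manifold ContDiff

/-!
Test stability with `ξ = c η`. Wherever `η` is differentiable (almost everywhere, by Rademacher),
`|∇(c η)|² = ⟪∇(c η²), ∇c⟫ + c² |∇η|²`, and integrating by parts against the Lipschitz function
`c η²` turns `∫ ⟪∇(c η²), ∇c⟫` into `-∫ Δc · c η²`. Since `c` is only `C²` on `Ω`, it is first
replaced by `χ c`, with `χ` smooth, compactly supported in `Ω` and equal to `1` near `tsupport η`;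
this changes neither side of the inequality.
-/

theorem LipschitzWith.mul_of_bound {α R : Type*} [PseudoMetricSpace α] [SeminormedRing R]
    {f g : α → R} {Kf Kg A B : ℝ≥0} (hf : LipschitzWith Kf f) (hg : LipschitzWith Kg g)
    (hfA : ∀ x, ‖f x‖ ≤ A) (hgB : ∀ x, ‖g x‖ ≤ B) :
    LipschitzWith (A * Kg + B * Kf) fun x => f x * g x := by
  refine LipschitzWith.of_dist_le_mul fun x y => ?_
  rw [dist_eq_norm, show f x * g x - f y * g y = f x * (g x - g y) + (f x - f y) * g y by
    noncomm_ring]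
  calc ‖f x * (g x - g y) + (f x - f y) * g y‖
      ≤ ‖f x‖ * ‖g x - g y‖ + ‖f x - f y‖ * ‖g y‖ :=
        (norm_add_le _ _).trans (add_le_add (norm_mul_le _ _) (norm_mul_le _ _))
    _ ≤ A * (Kg * dist x y) + (Kf * dist x y) * B := by
        rw [← dist_eq_norm, ← dist_eq_norm]
        gcongr
        exacts [hfA x, hg.dist_le_mul x y, hf.dist_le_mul x y, hgB y]
    _ = ↑(A * Kg + B * Kf) * dist x y := by push_cast; ring

theorem LipschitzWith.exists_mul_of_hasCompactSupport {α R : Type*} [PseudoMetricSpace α]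
    [SeminormedRing R] {f g : α → R} {Kf Kg : ℝ≥0} (hf : LipschitzWith Kf f)
    (hg : LipschitzWith Kg g) (hfs : HasCompactSupport f) (hgs : HasCompactSupport g) :
    ∃ K, LipschitzWith K fun x => f x * g x := by
  obtain ⟨A, hA⟩ := hfs.exists_bound_of_continuous hf.continuous
  obtain ⟨B, hB⟩ := hgs.exists_bound_of_continuous hg.continuous
  exact ⟨_, hf.mul_of_bound hg (A := A.toNNReal) (B := B.toNNReal)
    (fun x => (hA x).trans (Real.le_coe_toNNReal A))
    (fun x => (hB x).trans (Real.le_coe_toNNReal B))⟩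

theorem ContDiffOn.contDiff_mul_of_tsupport_subset {E 𝕜 : Type*} [NontriviallyNormedField 𝕜]
    [NormedAddCommGroup E] [NormedSpace 𝕜 E] {n : WithTop ℕ∞} {χ c : E → 𝕜} {U : Set E}
    (hc : ContDiffOn 𝕜 n c U) (hU : IsOpen U) (hχ : ContDiff 𝕜 n χ) (hχU : tsupport χ ⊆ U) :
    ContDiff 𝕜 n fun x => χ x * c x := by
  refine contDiff_iff_contDiffAt.2 fun x => ?_
  by_cases hx : x ∈ U
  · exact hχ.contDiffAt.mul (hc.contDiffAt (hU.mem_nhds hx))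
  · refine contDiffAt_const (c := (0 : 𝕜)).congr_of_eventuallyEq ?_
    filter_upwards [notMem_tsupport_iff_eventuallyEq.1 fun h => hx (hχU h)] with y hy
    simp [hy]

theorem ContDiff.continuous_fderiv_fderiv_apply {E : Type*} [NormedAddCommGroup E]
    [NormedSpace ℝ E] {c : E → ℝ} (hc : ContDiff ℝ 2 c) (v w : E) :
    Continuous fun x => fderiv ℝ (fun y => fderiv ℝ c y v) x w :=
  (((hc.fderiv_right (by norm_num)).clm_apply contDiff_const).continuous_fderiv
    one_ne_zero).clm_apply continuous_const

theorem exists_contDiff_hasCompactSupport_eventually_eq_one {E : Type*} [NormedAddCommGroup E]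
    [NormedSpace ℝ E] [FiniteDimensional ℝ E] {n : ℕ∞} {K U : Set E} (hK : IsCompact K)
    (hU : IsOpen U) (hKU : K ⊆ U) :
    ∃ χ : E → ℝ, ContDiff ℝ n χ ∧ HasCompactSupport χ ∧ tsupport χ ⊆ U ∧
      ∀ᶠ x in 𝓝ˢ K, χ x = 1 := by
  obtain ⟨L, hL, hKL, hLU⟩ := exists_compact_between hK hU hKU
  obtain ⟨χ, hχ1, hχ0, -⟩ := exists_contMDiffMap_one_nhds_of_subset_interior
    (n := n) 𝓘(ℝ, E) hK.isClosed hKL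
  have hsupp : tsupport χ ⊆ L :=
    closure_minimal (fun x hx => by_contra fun h => hx (hχ0 x h)) hL.isClosed
  exact ⟨χ, contMDiff_iff_contDiff.1 χ.contMDiff, HasCompactSupport.of_support_subset_isCompact hL
    (subset_closure.trans hsupp), hsupp.trans hLU, hχ1⟩

theorem ContDiffOn.exists_contDiff_hasCompactSupport_eventuallyEq {E : Type*}
    [NormedAddCommGroup E] [NormedSpace ℝ E] [FiniteDimensional ℝ E] {n : ℕ∞} {c : E → ℝ}
    {K U : Set E} (hc : ContDiffOn ℝ n c U) (hU : IsOpen U) (hK : IsCompact K) (hKU : K ⊆ U) :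
    ∃ c₀ : E → ℝ, ContDiff ℝ n c₀ ∧ HasCompactSupport c₀ ∧ c₀ =ᶠ[𝓝ˢ K] c := by
  obtain ⟨χ, hχ, hχs, hχU, hχ1⟩ := exists_contDiff_hasCompactSupport_eventually_eq_one hK hU hKU
  exact ⟨fun x => χ x * c x, hc.contDiff_mul_of_tsupport_subset hU hχ hχU, hχs.mul_right,
    hχ1.mono fun x hx => by simp [hx]⟩

section Gradient

variable {F : Type*} [NormedAddCommGroup F] [InnerProductSpace ℝ F] [CompleteSpace F]
  {f g : F → ℝ} {x : F}

theorem norm_gradient_eq_norm_fderiv (f : F → ℝ) (x : F) : ‖gradient f x‖ = ‖fderiv ℝ f x‖ := by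
  simp [gradient]

theorem LipschitzWith.norm_gradient_le {K : ℝ≥0} (hf : LipschitzWith K f) (x : F) :
    ‖gradient f x‖ ≤ K :=
  (norm_gradient_eq_norm_fderiv f x).trans_le (norm_fderiv_le_of_lipschitz ℝ hf)

theorem gradient_eq_zero_of_notMem_tsupport (h : x ∉ tsupport f) : gradient f x = 0 := by
  simp [gradient, fderiv_of_notMem_tsupport ℝ h]

theorem DifferentiableAt.gradient_mul (hf : DifferentiableAt ℝ f x) (hg : DifferentiableAt ℝ g x) :
    gradient (fun y => f y * g y) x = f x • gradient g x + g x • gradient f x := by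
  simp [gradient, fderiv_fun_mul hf hg]

theorem norm_gradient_mul_sq (hf : DifferentiableAt ℝ f x) (hg : DifferentiableAt ℝ g x) :
    ‖gradient (fun y => f y * g y) x‖ ^ 2 =
      ⟪gradient (fun y => f y * g y ^ 2) x, gradient f x⟫ + f x ^ 2 * ‖gradient g x‖ ^ 2 := by
  have hg2 : gradient (fun y => g y ^ 2) x = (2 * g x) • gradient g x := by
    simp only [sq, hg.gradient_mul hg, ← add_smul, two_mul]
  rw [hf.gradient_mul hg, hf.gradient_mul (hg.fun_pow 2), hg2, norm_add_sq_real]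
  simp only [inner_add_left, inner_smul_left, inner_smul_right, norm_smul,
    real_inner_self_eq_norm_sq, Real.norm_eq_abs, mul_pow, sq_abs, conj_trivial]
  ring

end Gradient

section Integration

variable {E : Type*} [NormedAddCommGroup E] [NormedSpace ℝ E]
  [MeasurableSpace E] [BorelSpace E] {μ : Measure E} {c g : E → ℝ} {K : ℝ≥0}

theorem LipschitzWith.integrable_fderiv_apply_mul_fderiv_apply [IsFiniteMeasureOnCompacts μ]
    (hg : LipschitzWith K g) (hc : ContDiff ℝ 1 c) (hcs : HasCompactSupport c) (v w : E) :
    Integrable (fun x => fderiv ℝ g x v * fderiv ℝ c x w) μ := by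
  refine Integrable.bdd_mul (c := K * ‖v‖) ?_
    (measurable_fderiv_apply_const ℝ g v).aestronglyMeasurable (ae_of_all _ fun x => ?_)
  · exact ((hc.continuous_fderiv one_ne_zero).clm_apply continuous_const)
      |>.integrable_of_hasCompactSupport (hcs.fderiv_apply ℝ w)
  · exact ((fderiv ℝ g x).le_opNorm v).trans
      (mul_le_mul_of_nonneg_right (norm_fderiv_le_of_lipschitz ℝ hg) (norm_nonneg v))

variable [FiniteDimensional ℝ E] [μ.IsAddHaarMeasure]

theorem integral_fderiv_fderiv_apply_mul_eq_neg (hc : ContDiff ℝ 2 c) (hcs : HasCompactSupport c)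
    (hg : LipschitzWith K g) (hgs : HasCompactSupport g) (v : E) :
    ∫ x, fderiv ℝ (fun y => fderiv ℝ c y v) x v * g x ∂μ =
      -∫ x, fderiv ℝ g x v * fderiv ℝ c x v ∂μ := by
  have hcv : ContDiff ℝ 1 fun y => fderiv ℝ c y v :=
    (hc.fderiv_right (by norm_num)).clm_apply contDiff_const
  obtain ⟨L, hL⟩ := hcv.lipschitzWith_of_hasCompactSupport (hcs.fderiv_apply ℝ v) one_ne_zero
  calc ∫ x, fderiv ℝ (fun y => fderiv ℝ c y v) x v * g x ∂μ
      = ∫ x, lineDeriv ℝ (fun y => fderiv ℝ c y v) x v * g x ∂μ := by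
        simp_rw [((hcv.differentiable one_ne_zero) _).lineDeriv_eq_fderiv]
    _ = ∫ x, lineDeriv ℝ g x (-v) * fderiv ℝ c x v ∂μ := hL.integral_lineDeriv_mul_eq hg hgs v
    _ = ∫ x, -(fderiv ℝ g x v * fderiv ℝ c x v) ∂μ := by
        refine integral_congr_ae ?_
        filter_upwards [hg.ae_differentiableAt] with x hx
        rw [hx.lineDeriv_eq_fderiv, map_neg, neg_mul]
    _ = -∫ x, fderiv ℝ g x v * fderiv ℝ c x v ∂μ := integral_neg _

end Integration

section Euclidean

variable {n : ℕ} {c g η : EuclideanSpace ℝ (Fin n) → ℝ} {K : ℝ≥0}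

theorem inner_gradient_eq_sum (φ ψ : EuclideanSpace ℝ (Fin n) → ℝ) (x : EuclideanSpace ℝ (Fin n)) :
    ⟪gradient φ x, gradient ψ x⟫ =
      ∑ i, fderiv ℝ φ x (EuclideanSpace.single i 1) * fderiv ℝ ψ x (EuclideanSpace.single i 1) := by
  simp only [← inner_gradient_left, PiLp.inner_apply]
  simp [mul_comm]

theorem lap_congr_of_eventuallyEq {x : EuclideanSpace ℝ (Fin n)} (h : c =ᶠ[𝓝 x] g) :
    lap c x = lap g x := by
  refine Finset.sum_congr rfl fun i _ => ?_
  have hi : (fun y => fderiv ℝ c y (EuclideanSpace.single i 1)) =ᶠ[𝓝 x]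
      fun y => fderiv ℝ g y (EuclideanSpace.single i 1) :=
    (h.fderiv (𝕜 := ℝ)).mono fun y hy => by simp only [hy]
  rw [hi.fderiv_eq]

theorem continuous_lap (hc : ContDiff ℝ 2 c) : Continuous (lap c) :=
  continuous_finsetSum _ fun _ _ => hc.continuous_fderiv_fderiv_apply _ _

theorem LipschitzWith.integrable_inner_gradient (hg : LipschitzWith K g) (hc : ContDiff ℝ 1 c)
    (hcs : HasCompactSupport c) : Integrable fun x => ⟪gradient g x, gradient c x⟫ := by
  simp_rw [inner_gradient_eq_sum]
  exact integrable_finsetSum _ fun i _ => hg.integrable_fderiv_apply_mul_fderiv_apply hc hcs _ _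

theorem integral_lap_mul_eq_neg_integral_inner_gradient (hc : ContDiff ℝ 2 c)
    (hcs : HasCompactSupport c) (hg : LipschitzWith K g) (hgs : HasCompactSupport g) :
    ∫ x, lap c x * g x = -∫ x, ⟪gradient g x, gradient c x⟫ := by
  have hc1 : ContDiff ℝ 1 c := hc.of_le (by norm_num)
  simp_rw [inner_gradient_eq_sum, lap, Finset.sum_mul]
  rw [integral_finsetSum, integral_finsetSum, ← Finset.sum_neg_distrib]
  · exact Finset.sum_congr rfl fun i _ => integral_fderiv_fderiv_apply_mul_eq_neg hc hcs hg hgs _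
  · exact fun i _ => hg.integrable_fderiv_apply_mul_fderiv_apply hc1 hcs _ _
  · exact fun i _ => ((hc.continuous_fderiv_fderiv_apply _ _).mul hg.continuous)
      |>.integrable_of_hasCompactSupport hgs.mul_left

theorem LipschitzWith.integrable_sq_mul_norm_gradient_sq (hη : LipschitzWith K η)
    (hc : Continuous c) (hcs : HasCompactSupport c) :
    Integrable fun x => c x ^ 2 * ‖gradient η x‖ ^ 2 := by
  refine Integrable.mul_bdd (c := K ^ 2) ((hc.pow 2).integrable_of_hasCompactSupport
    (hcs.comp_left (zero_pow two_ne_zero))) ?_ (ae_of_all _ fun x => ?_)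
  · simp_rw [norm_gradient_eq_norm_fderiv]
    exact ((measurable_fderiv ℝ η).norm.pow_const 2).aestronglyMeasurable
  · rw [norm_pow, norm_norm]
    exact pow_le_pow_left₀ (norm_nonneg _) (hη.norm_gradient_le x) 2

theorem ContDiff.exists_lipschitzWith_mul_sq (hc : ContDiff ℝ 1 c) (hcs : HasCompactSupport c)
    (hη : LipschitzWith K η) (hηs : HasCompactSupport η) :
    ∃ L, LipschitzWith L fun x => c x * η x ^ 2 := by
  obtain ⟨Kc, hKc⟩ := hc.lipschitzWith_of_hasCompactSupport hcs one_ne_zero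
  obtain ⟨K2, hK2⟩ := hη.exists_mul_of_hasCompactSupport hη hηs hηs
  simp_rw [← sq] at hK2
  exact hKc.exists_mul_of_hasCompactSupport hK2 hcs (hηs.comp_left (zero_pow two_ne_zero))

theorem ae_norm_gradient_mul_sq (hc : Differentiable ℝ c) (hη : LipschitzWith K η) :
    ∀ᵐ x, ‖gradient (fun y => c y * η y) x‖ ^ 2 =
      ⟪gradient (fun y => c y * η y ^ 2) x, gradient c x⟫ + c x ^ 2 * ‖gradient η x‖ ^ 2 := by
  filter_upwards [hη.ae_differentiableAt] with x hx
  exact norm_gradient_mul_sq (hc x) hx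

theorem integrable_norm_gradient_mul_sq (hc : ContDiff ℝ 1 c) (hcs : HasCompactSupport c)
    (hη : LipschitzWith K η) (hηs : HasCompactSupport η) :
    Integrable fun x => ‖gradient (fun y => c y * η y) x‖ ^ 2 := by
  obtain ⟨L, hL⟩ := hc.exists_lipschitzWith_mul_sq hcs hη hηs
  exact ((hL.integrable_inner_gradient hc hcs).add
    (hη.integrable_sq_mul_norm_gradient_sq hc.continuous hcs)).congr
    ((ae_norm_gradient_mul_sq (hc.differentiable one_ne_zero) hη).mono fun _ h => h.symm)

theorem integral_norm_gradient_mul_sq (hc : ContDiff ℝ 2 c) (hcs : HasCompactSupport c)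
    (hη : LipschitzWith K η) (hηs : HasCompactSupport η) :
    ∫ x, ‖gradient (fun y => c y * η y) x‖ ^ 2 =
      (∫ x, c x ^ 2 * ‖gradient η x‖ ^ 2) - ∫ x, lap c x * c x * η x ^ 2 := by
  have hc1 : ContDiff ℝ 1 c := hc.of_le (by norm_num)
  obtain ⟨L, hL⟩ := hc1.exists_lipschitzWith_mul_sq hcs hη hηs
  have hibp := integral_lap_mul_eq_neg_integral_inner_gradient hc hcs hL
    (hcs.mul_right (f' := fun x => η x ^ 2))
  simp_rw [← mul_assoc] at hibp
  rw [integral_congr_ae (ae_norm_gradient_mul_sq (hc.differentiable two_ne_zero) hη),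
    integral_add (hL.integrable_inner_gradient hc1 hcs)
      (hη.integrable_sq_mul_norm_gradient_sq hc.continuous hcs)]
  linarith

end Euclidean

theorem integral_lap_add_mul_mul_sq_le {n : ℕ} {Ω : Set (EuclideanSpace ℝ (Fin n))}
    {a c η : EuclideanSpace ℝ (Fin n) → ℝ} {K : ℝ≥0} (ha : ContinuousOn a Ω)
    (hc : ContDiff ℝ 2 c) (hcs : HasCompactSupport c) (hη : LipschitzWith K η)
    (hηs : HasCompactSupport η) (hηΩ : tsupport η ⊆ Ω)
    (hstab : 0 ≤ ∫ x in Ω, (‖gradient (fun y => c y * η y) x‖ ^ 2 - a x * (c x * η x) ^ 2)) :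
    ∫ x in Ω, (lap c x + a x * c x) * c x * η x ^ 2 ≤ ∫ x in Ω, c x ^ 2 * ‖gradient η x‖ ^ 2 := by
  have hΩ {F : EuclideanSpace ℝ (Fin n) → ℝ} (hF : ∀ x ∉ tsupport η, F x = 0) :
      ∫ x in Ω, F x = ∫ x, F x :=
    setIntegral_eq_integral_of_forall_compl_eq_zero fun x hx => hF x fun h => hx (hηΩ h)
  have hη0 {x} (hx : x ∉ tsupport η) : η x = 0 := image_eq_zero_of_notMem_tsupport hx
  have haξ : Integrable fun x => a x * (c x * η x) ^ 2 :=
    (((ha.mono hηΩ).mul ((hc.continuous.mul hη.continuous).pow 2).continuousOn).integrableOn_compact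
      hηs).integrable_of_forall_notMem_eq_zero fun x hx => by simp [hη0 hx]
  have hlap : Integrable fun x => lap c x * c x * η x ^ 2 :=
    ((continuous_lap hc).mul hc.continuous |>.mul (hη.continuous.pow 2))
      |>.integrable_of_hasCompactSupport (hηs.comp_left (zero_pow two_ne_zero)).mul_left
  rw [hΩ fun x hx => by simp [gradient_eq_zero_of_notMem_tsupport
      (fun h => hx (tsupport_mul_subset_right h)), hη0 hx]] at hstab
  rw [integral_sub (integrable_norm_gradient_mul_sq (hc.of_le (by norm_num)) hcs hη hηs) haξ,
    integral_norm_gradient_mul_sq hc hcs hη hηs] at hstab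
  rw [hΩ fun x hx => by simp [hη0 hx],
    hΩ fun x hx => by simp [gradient_eq_zero_of_notMem_tsupport hx]]
  have hsplit : ∫ x, (lap c x + a x * c x) * c x * η x ^ 2 =
      (∫ x, lap c x * c x * η x ^ 2) + ∫ x, a x * (c x * η x) ^ 2 := by
    rw [← integral_add hlap haξ]
    exact integral_congr_ae (ae_of_all _ fun x => by ring)
  linarith

theorem stmt6_general (n : ℕ) (Ω : Set (EuclideanSpace ℝ (Fin n)))
    (hopen : IsOpen Ω)
    (f f' f'' : ℝ → ℝ) (hC2 : C2On01 f f' f'')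
    (u : EuclideanSpace ℝ (Fin n) → ℝ)
    (hu : ContDiffOn ℝ 2 u Ω)
    (hrange : ∀ x ∈ Ω, 0 ≤ u x ∧ u x < 1)
    (hstab : ∀ ξ : EuclideanSpace ℝ (Fin n) → ℝ,
      (∃ L : NNReal, LipschitzWith L ξ) → HasCompactSupport ξ → tsupport ξ ⊆ Ω →
      0 ≤ ∫ x in Ω, (‖gradient ξ x‖ ^ 2 - f' (u x) * ξ x ^ 2))
    (c : EuclideanSpace ℝ (Fin n) → ℝ) (hc : ContDiffOn ℝ 2 c Ω)
    (η : EuclideanSpace ℝ (Fin n) → ℝ)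
    (hη : ∃ L : NNReal, LipschitzWith L η)
    (hηsupp : HasCompactSupport η) (hηΩ : tsupport η ⊆ Ω) :
    ∫ x in Ω, (lap c x + f' (u x) * c x) * c x * η x ^ 2 ≤
      ∫ x in Ω, c x ^ 2 * ‖gradient η x‖ ^ 2 := by
  obtain ⟨K, hη⟩ := hη
  obtain ⟨c₀, hc₀, hc₀s, hc₀c⟩ :=
    hc.exists_contDiff_hasCompactSupport_eventuallyEq (n := 2) hopen hηsupp hηΩ
  have ha : ContinuousOn (fun x => f' (u x)) Ω :=
    ContinuousOn.comp (g := f') (fun t ht => (hC2.2.1 t ht).continuousWithinAt) hu.continuousOn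
      hrange
  obtain ⟨K₀, hK₀⟩ := hc₀.lipschitzWith_of_hasCompactSupport hc₀s two_ne_zero
  have key := integral_lap_add_mul_mul_sq_le ha hc₀ hc₀s hη hηsupp hηΩ
    (hstab _ (hK₀.exists_mul_of_hasCompactSupport hη hc₀s hηsupp) hc₀s.mul_right
      (tsupport_mul_subset_right.trans hηΩ))
  have hlhs (x) : (lap c x + f' (u x) * c x) * c x * η x ^ 2 =
      (lap c₀ x + f' (u x) * c₀ x) * c₀ x * η x ^ 2 := by
    by_cases hx : x ∈ tsupport η
    · rw [hc₀c.self_of_nhdsSet hx,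
        lap_congr_of_eventuallyEq (hc₀c.filter_mono (nhds_le_nhdsSet hx))]
    · rw [image_eq_zero_of_notMem_tsupport hx]
      ring
  have hrhs (x) : c x ^ 2 * ‖gradient η x‖ ^ 2 = c₀ x ^ 2 * ‖gradient η x‖ ^ 2 := by
    by_cases hx : x ∈ tsupport η
    · rw [hc₀c.self_of_nhdsSet hx]
    · simp [gradient_eq_zero_of_notMem_tsupport hx]
  simpa only [hlhs, hrhs] using key

/-- The rewritten stability inequality: if `u` solves `-Δu = f(u)` in a bounded
domain `Ω` and is stable with respect to all Lipschitz test functions with compact support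
in `Ω`, then for every `c ∈ C²(Ω)` and every Lipschitz `η` with compact support in `Ω`,
`∫ (Δc + f'(u)c) c η² ≤ ∫ c² |∇η|²`. -/
theorem stmt6 (n : ℕ) (hn : 1 ≤ n) (Ω : Set (EuclideanSpace ℝ (Fin n)))
    (hopen : IsOpen Ω) (hbd : IsBounded Ω) (hconn : IsConnected Ω)
    (f f' f'' : ℝ → ℝ) (hC2 : C2On01 f f' f'')
    (u : EuclideanSpace ℝ (Fin n) → ℝ)
    (hu : ContDiffOn ℝ 2 u Ω)
    (hrange : ∀ x ∈ Ω, 0 ≤ u x ∧ u x < 1)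
    (heq : ∀ x ∈ Ω, -lap u x = f (u x))
    (hstab : ∀ ξ : EuclideanSpace ℝ (Fin n) → ℝ,
      (∃ L : NNReal, LipschitzWith L ξ) → HasCompactSupport ξ → tsupport ξ ⊆ Ω →
      0 ≤ ∫ x in Ω, (‖gradient ξ x‖ ^ 2 - f' (u x) * ξ x ^ 2))
    (c : EuclideanSpace ℝ (Fin n) → ℝ) (hc : ContDiffOn ℝ 2 c Ω)
    (η : EuclideanSpace ℝ (Fin n) → ℝ)
    (hη : ∃ L : NNReal, LipschitzWith L η)
    (hηsupp : HasCompactSupport η) (hηΩ : tsupport η ⊆ Ω) :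
    ∫ x in Ω, (lap c x + f' (u x) * c x) * c x * η x ^ 2 ≤
      ∫ x in Ω, c x ^ 2 * ‖gradient η x‖ ^ 2 :=
  stmt6_general n Ω hopen f f' f'' hC2 u hu hrange hstab c hc η hη hηsupp hηΩ
end

section
/- (Simon's lemma) Let n ≥ 1 be an integer, α ∈ ℝ, and C₀ > 0. Let S be a function from the class of open balls B ⊂ ℝⁿ to [0, +∞] which is subadditive, in the sense that whenever a ball B is covered by finitely many balls B₁, …, B_N one has S(B) ≤ Σ_{j=1}^N S(B_j), and assume S(B₁(0)) < ∞. Then there exists δ > 0, depending only on n and α, such that: if r^α S(B_{r/4}(z)) ≤ δ r^α S(B_r(z)) + C₀ for every ball B_r(z) ⊂ B₁(0), then S(B_{1/2}(0)) ≤ C C₀, where C is a constant depending only on n and α. -/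
/-!
Divided by `r^α`, the hypothesis reads `S(B_{r/4}(z)) ≤ δ S(B_r(z)) + C₀ r^{-α}`. Fix once and for
all `N` balls of radius `1/8` covering `B₁(0)`; rescaled, they cover any `B_r(z)` by `N` balls
`B_{r/8}(z + r pⱼ)`, the quarters of balls of radius `r/2`. So `S(B_{r/4}(z))` is at most `δ`
times a sum of `N` quarter-ball values one scale down, plus an error `C₀ r^{-α}` that grows by the
factor `2^α` per scale. Once `Nδ < 1` and `2 N δ 2^α ≤ 1`, iterating `k` times gives
`S(B_{r/4}(z)) ≤ (Nδ)^k S(B₁(0)) + 2 C₀ r^{-α}`, and `k → ∞` removes the first term because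
`S(B₁(0)) < ∞`. Covering `B_{1/2}(0)` by `N` quarter balls of radius `1/16` finishes the proof.
-/

open Set Filter Topology Metric
open scoped ENNReal

theorem le_two_mul_of_le_mul_sum_add {X ι : Type*} [Fintype ι] {s : Set X}
    {G h : X → ℝ≥0∞} {child : X → ι → X} {a q M : ℝ≥0∞} (hM : M ≠ ⊤)
    (hGM : ∀ x ∈ s, G x ≤ M) (hchild : ∀ x ∈ s, ∀ i, child x i ∈ s)
    (hh : ∀ x ∈ s, ∀ i, h (child x i) ≤ q * h x)
    (hG : ∀ x ∈ s, G x ≤ a * ∑ i, G (child x i) + h x)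
    (ha : Fintype.card ι * a < 1) (haq : 2 * (Fintype.card ι * a * q) ≤ 1)
    {x : X} (hx : x ∈ s) : G x ≤ 2 * h x := by
  set b : ℝ≥0∞ := Fintype.card ι * a
  have iterate : ∀ k : ℕ, ∀ x ∈ s, G x ≤ b ^ k * M + 2 * h x := by
    intro k
    induction k with
    | zero => exact fun x hx => by simpa using le_add_right (hGM x hx)
    | succ k ih =>
      intro x hx
      calc G x ≤ a * ∑ i, G (child x i) + h x := hG x hx
        _ ≤ a * ∑ _i : ι, (b ^ k * M + 2 * (q * h x)) + h x := by
          gcongr with i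
          exact (ih _ (hchild x hx i)).trans (by gcongr; exact hh x hx i)
        _ = b ^ (k + 1) * M + 2 * (b * q) * h x + h x := by
          simp only [Finset.sum_const, Finset.card_univ, nsmul_eq_mul, b]
          ring
        _ ≤ b ^ (k + 1) * M + 1 * h x + h x := by gcongr
        _ = b ^ (k + 1) * M + 2 * h x := by ring
  have hlim : Tendsto (fun k : ℕ => b ^ k * M + 2 * h x) atTop
      (𝓝 (0 * M + 2 * h x)) :=
    (ENNReal.Tendsto.mul_const (ENNReal.tendsto_pow_atTop_nhds_zero_of_lt_one ha)
      (Or.inr hM)).add_const _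
  rw [zero_mul, zero_add] at hlim
  exact ge_of_tendsto' hlim fun k => iterate k x hx

theorem ENNReal.le_mul_add_ofReal_div_of_ofReal_mul_le {t δ c : ℝ} {A B : ℝ≥0∞} (ht : 0 < t)
    (h : ENNReal.ofReal t * A ≤ ENNReal.ofReal (δ * t) * B + ENNReal.ofReal c) :
    A ≤ ENNReal.ofReal δ * B + ENNReal.ofReal (c / t) := by
  have ht' : ENNReal.ofReal t⁻¹ * ENNReal.ofReal t = 1 := by
    rw [← ENNReal.ofReal_mul (inv_nonneg.2 ht.le), inv_mul_cancel₀ ht.ne', ENNReal.ofReal_one]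
  calc A = ENNReal.ofReal t⁻¹ * (ENNReal.ofReal t * A) := by rw [← mul_assoc, ht', one_mul]
    _ ≤ ENNReal.ofReal t⁻¹ * (ENNReal.ofReal (δ * t) * B + ENNReal.ofReal c) := by gcongr
    _ = ENNReal.ofReal δ * B + ENNReal.ofReal (c / t) := by
      rw [mul_add, ← mul_assoc, ← ENNReal.ofReal_mul (inv_nonneg.2 ht.le),
        ← ENNReal.ofReal_mul (inv_nonneg.2 ht.le), div_eq_inv_mul]
      congr 3
      field_simp

theorem exists_fin_cover_closedBall_by_balls {X : Type*} [PseudoMetricSpace X] [ProperSpace X]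
    (x : X) (r : ℝ) {ε : ℝ} (hε : 0 < ε) :
    ∃ (N : ℕ) (p : Fin N → X), (∀ j, p j ∈ closedBall x r) ∧
      closedBall x r ⊆ ⋃ j, ball (p j) ε := by
  obtain ⟨t, hts, htfin, hcov⟩ := finite_cover_balls_of_compact (isCompact_closedBall x r) hε
  obtain ⟨N, p, -, rfl⟩ := htfin.fin_param
  exact ⟨N, p, fun j => hts (mem_range_self j), by simpa using hcov⟩

def BallSubadditive {X : Type*} [PseudoMetricSpace X] (S : X → ℝ → ℝ≥0∞) : Prop :=
  ∀ (z : X) (r : ℝ) (N : ℕ) (c : Fin N → X) (ρ : Fin N → ℝ),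
    ball z r ⊆ ⋃ j, ball (c j) (ρ j) → S z r ≤ ∑ j, S (c j) (ρ j)

theorem BallSubadditive.mono {X : Type*} [PseudoMetricSpace X] {S : X → ℝ → ℝ≥0∞}
    (hS : BallSubadditive S) {z c : X} {r ρ : ℝ} (h : ball z r ⊆ ball c ρ) : S z r ≤ S c ρ := by
  simpa using hS z r 1 (fun _ => c) (fun _ => ρ) (by rwa [iUnion_const])

section SimonLemma

variable {E : Type*} [NormedAddCommGroup E] [NormedSpace ℝ E]

theorem ball_subset_iUnion_ball_add_smul {ι : Type*} {p : ι → E} {ε : ℝ}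
    (hp : closedBall (0 : E) 1 ⊆ ⋃ j, ball (p j) ε) (y : E) {ρ : ℝ} (hρ : 0 < ρ) :
    ball y ρ ⊆ ⋃ j, ball (y + ρ • p j) (ρ * ε) := by
  intro x hx
  have hx' : ρ⁻¹ • (x - y) ∈ closedBall (0 : E) 1 := by
    rw [mem_ball, dist_eq_norm] at hx
    rw [mem_closedBall_zero_iff, norm_smul, norm_inv, Real.norm_eq_abs, abs_of_pos hρ,
      inv_mul_le_iff₀ hρ, mul_one]
    exact hx.le
  obtain ⟨j, hj⟩ := mem_iUnion.1 (hp hx')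
  refine mem_iUnion.2 ⟨j, ?_⟩
  rw [mem_ball, dist_eq_norm] at hj ⊢
  have hrescale : x - (y + ρ • p j) = ρ • (ρ⁻¹ • (x - y) - p j) := by
    rw [smul_sub, smul_inv_smul₀ hρ.ne']
    abel
  rw [hrescale, norm_smul, Real.norm_eq_abs, abs_of_pos hρ]
  exact mul_lt_mul_of_pos_left hj hρ

variable {S : E → ℝ → ℝ≥0∞} {N : ℕ} {p : Fin N → E} {α δ C₀ : ℝ}

theorem BallSubadditive.le_two_mul_of_decay (hS : BallSubadditive S) (hS1 : S 0 1 ≠ ⊤)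
    (hp1 : ∀ j, ‖p j‖ ≤ 1) (hp : closedBall (0 : E) 1 ⊆ ⋃ j, ball (p j) (1 / 8))
    (hδ0 : 0 ≤ δ) (hδ : N * δ < 1) (hδα : 2 * (N * δ * 2 ^ α) ≤ 1)
    (hdecay : ∀ (z : E) (r : ℝ), 0 < r → ball z r ⊆ ball 0 1 →
      ENNReal.ofReal (r ^ α) * S z (r / 4) ≤
        ENNReal.ofReal (δ * r ^ α) * S z r + ENNReal.ofReal C₀)
    {y : E} {ρ : ℝ} (hρ : 0 < ρ) (hyρ : ‖y‖ + 2 * ρ ≤ 1) :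
    S y (ρ / 4) ≤ 2 * ENNReal.ofReal (C₀ / ρ ^ α) := by
  -- `(z, r)` stands for `B_{r/4}(z)`; its children are the quarters of the `B_{r/2}(z + r pⱼ)`.
  let s : Set (E × ℝ) := {x | 0 < x.2 ∧ ‖x.1‖ + 2 * x.2 ≤ 1}
  have hball : ∀ x ∈ s, ball x.1 x.2 ⊆ ball (0 : E) 1 := fun x hx =>
    ball_subset_ball' (by rw [dist_zero_right]; linarith [hx.1, hx.2])
  refine le_two_mul_of_le_mul_sum_add (s := s) (G := fun x => S x.1 (x.2 / 4))
    (h := fun x => ENNReal.ofReal (C₀ / x.2 ^ α))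
    (child := fun x j => (x.1 + x.2 • p j, x.2 / 2)) (a := ENNReal.ofReal δ)
    (q := ENNReal.ofReal (2 ^ α)) hS1 ?_ ?_ ?_ ?_ ?_ ?_ (x := (y, ρ)) ⟨hρ, hyρ⟩
  · exact fun x hx => hS.mono ((ball_subset_ball (by linarith [hx.1])).trans (hball x hx))
  · rintro ⟨z, r⟩ ⟨hr, hzr⟩ j
    refine ⟨half_pos hr, ?_⟩
    have := norm_add_le z (r • p j)
    rw [norm_smul, Real.norm_of_nonneg hr.le] at this
    nlinarith [hp1 j]
  · rintro ⟨z, r⟩ ⟨hr, -⟩ j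
    rw [← ENNReal.ofReal_mul (by positivity)]
    refine ENNReal.ofReal_le_ofReal (le_of_eq ?_)
    rw [Real.div_rpow hr.le zero_le_two]
    field_simp
  · rintro ⟨z, r⟩ hx
    have hcover := hS z r N _ _ (ball_subset_iUnion_ball_add_smul hp z hx.1)
    rw [show r * (1 / 8) = r / 2 / 4 by ring] at hcover
    calc S z (r / 4) ≤ ENNReal.ofReal δ * S z r + ENNReal.ofReal (C₀ / r ^ α) :=
          ENNReal.le_mul_add_ofReal_div_of_ofReal_mul_le (Real.rpow_pos_of_pos hx.1 α)
            (hdecay z r hx.1 (hball _ hx))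
      _ ≤ ENNReal.ofReal δ * ∑ j, S (z + r • p j) (r / 2 / 4) + ENNReal.ofReal (C₀ / r ^ α) := by
          gcongr
  · rw [Fintype.card_fin, ← ENNReal.ofReal_natCast, ← ENNReal.ofReal_mul (Nat.cast_nonneg N)]
    exact ENNReal.ofReal_lt_one.2 hδ
  · rw [Fintype.card_fin, ← ENNReal.ofReal_natCast, ← ENNReal.ofReal_mul (Nat.cast_nonneg N),
      ← ENNReal.ofReal_mul (by positivity), ← ENNReal.ofReal_ofNat,
      ← ENNReal.ofReal_mul zero_le_two, ← ENNReal.ofReal_one]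
    exact ENNReal.ofReal_le_ofReal hδα

theorem BallSubadditive.le_of_decay (hS : BallSubadditive S) (hS1 : S 0 1 ≠ ⊤)
    (hp1 : ∀ j, ‖p j‖ ≤ 1) (hp : closedBall (0 : E) 1 ⊆ ⋃ j, ball (p j) (1 / 8))
    (hδ0 : 0 ≤ δ) (hδ : N * δ < 1) (hδα : 2 * (N * δ * 2 ^ α) ≤ 1)
    (hdecay : ∀ (z : E) (r : ℝ), 0 < r → ball z r ⊆ ball 0 1 →
      ENNReal.ofReal (r ^ α) * S z (r / 4) ≤
        ENNReal.ofReal (δ * r ^ α) * S z r + ENNReal.ofReal C₀) :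
    S 0 (1 / 2) ≤ ENNReal.ofReal (2 * N * 4 ^ α * C₀) := by
  have hcover := hS 0 (1 / 2) N _ _ (ball_subset_iUnion_ball_add_smul hp 0 one_half_pos)
  rw [show (1 / 2 : ℝ) * (1 / 8) = 1 / 4 / 4 by norm_num] at hcover
  have hquarter : ∀ j, S (0 + (1 / 2 : ℝ) • p j) (1 / 4 / 4) ≤
      2 * ENNReal.ofReal (C₀ / (1 / 4) ^ α) := fun j =>
    hS.le_two_mul_of_decay hS1 hp1 hp hδ0 hδ hδα hdecay (by norm_num) (by
      rw [zero_add, norm_smul, Real.norm_of_nonneg one_half_pos.le]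
      linarith [hp1 j])
  calc S 0 (1 / 2) ≤ ∑ _j : Fin N, 2 * ENNReal.ofReal (C₀ / (1 / 4) ^ α) :=
        hcover.trans (Finset.sum_le_sum fun j _ => hquarter j)
    _ = ENNReal.ofReal (2 * N * 4 ^ α * C₀) := by
      rw [Finset.sum_const, Finset.card_univ, Fintype.card_fin, nsmul_eq_mul,
        ← ENNReal.ofReal_natCast, ← ENNReal.ofReal_ofNat, ← ENNReal.ofReal_mul zero_le_two,
        ← ENNReal.ofReal_mul (Nat.cast_nonneg N), Real.div_rpow zero_le_one (by norm_num),
        Real.one_rpow]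
      congr 1
      field_simp

end SimonLemma

theorem stmt10_general (n : ℕ) (α : ℝ) :
    ∃ δ : ℝ, 0 < δ ∧ ∃ C : ℝ, 0 < C ∧
      ∀ (S : EuclideanSpace ℝ (Fin n) → ℝ → ENNReal) (C₀ : ℝ), 0 < C₀ →
        (∀ (z : EuclideanSpace ℝ (Fin n)) (r : ℝ) (N : ℕ)
            (c : Fin N → EuclideanSpace ℝ (Fin n)) (ρ : Fin N → ℝ),
            ball z r ⊆ ⋃ j, ball (c j) (ρ j) → S z r ≤ ∑ j, S (c j) (ρ j)) →
        S 0 1 < ⊤ →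
        (∀ (z : EuclideanSpace ℝ (Fin n)) (r : ℝ), 0 < r → ball z r ⊆ ball 0 1 →
            ENNReal.ofReal (r ^ α) * S z (r / 4) ≤
              ENNReal.ofReal (δ * r ^ α) * S z r + ENNReal.ofReal C₀) →
        S 0 (1/2) ≤ ENNReal.ofReal (C * C₀) := by
  obtain ⟨N, p, hp1, hp⟩ := exists_fin_cover_closedBall_by_balls
    (0 : EuclideanSpace ℝ (Fin n)) 1 (by norm_num : (0 : ℝ) < 1 / 8)
  have h2α : 0 < (2 : ℝ) ^ α := Real.rpow_pos_of_pos two_pos α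
  have h4α : 0 < (4 : ℝ) ^ α := Real.rpow_pos_of_pos four_pos α
  have hN : (0 : ℝ) ≤ N := Nat.cast_nonneg N
  set δ : ℝ := (2 * (N + 1) * (1 + 2 ^ α))⁻¹ with hδ_def
  have hδ0 : 0 < δ := by positivity
  have hδ : N * δ < 1 := by
    rw [hδ_def, ← div_eq_mul_inv, div_lt_one (by positivity)]
    nlinarith
  have hδα : 2 * (N * δ * 2 ^ α) ≤ 1 := by
    rw [hδ_def, ← div_eq_mul_inv, div_mul_eq_mul_div, mul_div_assoc', div_le_one (by positivity)]
    nlinarith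
  refine ⟨δ, hδ0, 2 * (N + 1) * 4 ^ α, by positivity, fun S C₀ hC₀ hS hS1 hdecay => ?_⟩
  refine (BallSubadditive.le_of_decay hS hS1.ne (fun j => mem_closedBall_zero_iff.1 (hp1 j)) hp
    hδ0.le hδ hδα hdecay).trans (ENNReal.ofReal_le_ofReal ?_)
  nlinarith

/-- Simon's lemma: let `S` be a subadditive `[0,+∞]`-valued function on open
balls of `ℝⁿ` (here parametrized by center and radius) with `S(B₁(0)) < ∞`. There exists
`δ = δ(n,α) > 0` such that if `r^α S(B_{r/4}(z)) ≤ δ r^α S(B_r(z)) + C₀` whenever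
`B_r(z) ⊆ B₁(0)`, then `S(B_{1/2}(0)) ≤ C C₀` with `C = C(n,α)`. -/
theorem stmt10 (n : ℕ) (hn : 1 ≤ n) (α : ℝ) :
    ∃ δ : ℝ, 0 < δ ∧ ∃ C : ℝ, 0 < C ∧
      ∀ (S : EuclideanSpace ℝ (Fin n) → ℝ → ENNReal) (C₀ : ℝ), 0 < C₀ →
        (∀ (z : EuclideanSpace ℝ (Fin n)) (r : ℝ) (N : ℕ)
            (c : Fin N → EuclideanSpace ℝ (Fin n)) (ρ : Fin N → ℝ),
            ball z r ⊆ ⋃ j, ball (c j) (ρ j) → S z r ≤ ∑ j, S (c j) (ρ j)) →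
        S 0 1 < ⊤ →
        (∀ (z : EuclideanSpace ℝ (Fin n)) (r : ℝ), 0 < r → ball z r ⊆ ball 0 1 →
            ENNReal.ofReal (r ^ α) * S z (r / 4) ≤
              ENNReal.ofReal (δ * r ^ α) * S z r + ENNReal.ofReal C₀) →
        S 0 (1/2) ≤ ENNReal.ofReal (C * C₀) :=
  stmt10_general n α
end

section
/- Let Ω ⊂ ℝⁿ be a bounded domain with smooth boundary and let u ∈ C⁰(closure(Ω)) ∩ C²(Ω) with 0 ≤ u < 1 in Ω be a stable solution of −Δu = f(u) in Ω with u = 0 on ∂Ω, where f ∈ C²([0,1)) satisfies f ≥ 0, f′ ≥ 0, f″ ≥ 0, and lim_{t→1⁻} f(t) = +∞. Then ∫_Ω f′(u(x)) f(u(x)) dx ≤ C for a constant C depending only on f and the Lebesgue measure |Ω| of Ω. -/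
open MeasureTheory Set Filter Topology Bornology Metric

/-- A bounded domain (open, connected) in `ℝⁿ` with smooth boundary, described by a smooth
defining function `ρ` whose gradient does not vanish on the boundary. -/
def SmoothBoundedDomain {n : ℕ} (Ω : Set (EuclideanSpace ℝ (Fin n))) : Prop :=
  IsOpen Ω ∧ IsBounded Ω ∧ IsConnected Ω ∧
  ∃ ρ : EuclideanSpace ℝ (Fin n) → ℝ, ContDiff ℝ (⊤:ℕ∞) ρ ∧ Ω = {x | ρ x < 0} ∧
    ∀ x ∈ frontier Ω, fderiv ℝ ρ x ≠ 0

/-!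
Test the stability inequality with `ζ(u)`, where `ζ' = ψ` is `f'` cut off below a small level `ε`
(so that `ζ(u)` vanishes near `∂Ω`) and above `max u < 1`. Stability is assumed for smooth test
functions only, so it is first extended to `C¹` ones by mollification. Green's formula turns
`∫ ψ(u)² |∇u|²` into `∫ φ(u) f(u)` with `φ = ∫ ψ²`, whence `∫ f'(u) ζ(u)² ≤ ∫ φ(u) f(u)`.
Pointwise, `ζ ≥ f - f(0) - 1` and `φ ≤ f' ζ`; moreover `φ + 2K f' ≤ f' ζ` on `{u ≥ t₀}`, with
`K = f(0) + 1`, because `f` grows by `4K` on `[2ε, s₀]` and `f'` doubles between `s₀` and `t₀`.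
Integrating, `{u ≥ t₀}` carries at most half of `∫ f'(u) f(u)`, while on `{u < t₀}` the integrand
is at most `f'(t₀) f(t₀)`; so `∫_Ω f'(u) f(u) ≤ 2 f'(t₀) f(t₀) |Ω|`, where `ε, s₀, t₀` depend
only on `f`.
-/

open scoped Convolution
open ContinuousLinearMap (lsmul)

lemma IsCompact.exists_forall_le_lt {X : Type*} [TopologicalSpace X] {s : Set X} (hs : IsCompact s)
    {u : X → ℝ} (hu : ContinuousOn u s) {a b : ℝ} (hab : a < b) (hb : ∀ x ∈ s, u x < b) :
    ∃ T, a ≤ T ∧ T < b ∧ ∀ x ∈ s, u x ≤ T := by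
  rcases s.eq_empty_or_nonempty with rfl | hne
  · exact ⟨a, le_rfl, hab, by simp⟩
  obtain ⟨z, hz, hzmax⟩ := hs.exists_isMaxOn hne hu
  exact ⟨max (u z) a, le_max_right _ _, max_lt (hb z hz) hab,
    fun x hx => (hzmax hx).trans (le_max_left _ _)⟩

lemma integrableOn_comp_of_mapsTo {X : Type*} [TopologicalSpace X] [MeasurableSpace X]
    [OpensMeasurableSpace X] {μ : Measure X} {U : Set X} {u : X → ℝ} {s : Set ℝ} {φ : ℝ → ℝ}
    (hU : MeasurableSet U) (hμU : μ U ≠ ⊤) (hs : IsCompact s) (hφ : ContinuousOn φ s)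
    (hu : ContinuousOn u U) (hus : MapsTo u U s) : IntegrableOn (fun x => φ (u x)) U μ := by
  obtain ⟨C, hC⟩ := hs.exists_bound_of_continuousOn hφ
  exact .of_bound hμU.lt_top ((hφ.comp hu hus).aestronglyMeasurable hU) C
    ((ae_restrict_iff' hU).2 (ae_of_all _ fun x hx => hC _ (hus hx)))

lemma integrableOn_of_eq_zero_off {X : Type*} [TopologicalSpace X] [T2Space X] [MeasurableSpace X]
    [OpensMeasurableSpace X] {μ : Measure X} [IsFiniteMeasureOnCompacts μ] {U K : Set X}
    {f : X → ℝ} (hU : MeasurableSet U) (hK : IsCompact K) (hf : ContinuousOn f K)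
    (h0 : ∀ x ∈ U \ K, f x = 0) : IntegrableOn f U μ :=
  (hf.integrableOn_compact hK).of_forall_sdiff_eq_zero hU h0

lemma tsupport_indicator_subset {E F : Type*} [TopologicalSpace E] [Zero F] {U K : Set E}
    {g : E → F} (hK : IsClosed K) (h : ∀ x ∈ U \ K, g x = 0) : tsupport (U.indicator g) ⊆ K :=
  closure_minimal (fun x hx => by
    by_contra hxK
    rw [support_indicator] at hx
    exact hx.2 (h x ⟨hx.1, hxK⟩)) hK

/-- Integrating `hpt` against `hbc` shows that `A` carries at most half of `∫ a`. -/
lemma integral_le_of_indicator_le {α : Type*} [MeasurableSpace α] {μ : Measure α}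
    [IsFiniteMeasure μ] {a b c : α → ℝ} {A : Set α} {K M : ℝ} (hA : MeasurableSet A)
    (ha : Integrable a μ) (hb : Integrable b μ) (hc : Integrable c μ) (hK : 0 < K) (hM : 0 ≤ M)
    (hbc : ∫ x, b x ∂μ ≤ ∫ x, c x ∂μ)
    (hpt : ∀ᵐ x ∂μ, c x + 2 * K * A.indicator a x ≤ b x + K * a x)
    (haM : ∀ᵐ x ∂μ, x ∉ A → a x ≤ M) :
    ∫ x, a x ∂μ ≤ 2 * M * μ.real univ := by
  have hint : ∫ x, (c x + 2 * K * A.indicator a x) ∂μ ≤ ∫ x, (b x + K * a x) ∂μ :=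
    integral_mono_ae (hc.add ((ha.indicator hA).const_mul _)) (hb.add (ha.const_mul K)) hpt
  rw [integral_add hc ((ha.indicator hA).const_mul _), integral_add hb (ha.const_mul K),
    integral_const_mul, integral_const_mul, integral_indicator hA] at hint
  have hhalf : 2 * ∫ x in A, a x ∂μ ≤ ∫ x, a x ∂μ :=
    le_of_mul_le_mul_left (by linarith) hK
  have hcompl : ∫ x in Aᶜ, a x ∂μ ≤ M * μ.real univ := by
    calc ∫ x in Aᶜ, a x ∂μ ≤ ∫ _ in Aᶜ, M ∂μ :=
          integral_mono_ae ha.restrict (integrable_const M)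
            ((ae_restrict_iff' hA.compl).2 (haM.mono fun x hx hxA => hx hxA))
      _ = M * μ.real Aᶜ := by rw [setIntegral_const, smul_eq_mul, mul_comm]
      _ ≤ M * μ.real univ := mul_le_mul_of_nonneg_left (measureReal_mono (subset_univ _)) hM
  linarith [integral_add_compl hA ha]

lemma abs_sq_sub_mul_sq_le {a b c A B M : ℝ} (ha : |a| ≤ B) (hb : |b| ≤ A) (hc : |c| ≤ M) :
    |a ^ 2 - c * b ^ 2| ≤ B ^ 2 + M * A ^ 2 := by
  have h1 : |a ^ 2| ≤ B ^ 2 := by rw [abs_pow]; exact pow_le_pow_left₀ (abs_nonneg _) ha 2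
  have h2 : |c * b ^ 2| ≤ M * A ^ 2 := by
    rw [abs_mul, abs_pow]
    exact mul_le_mul hc (pow_le_pow_left₀ (abs_nonneg _) hb 2) (by positivity)
      ((abs_nonneg _).trans hc)
  exact (abs_sub _ _).trans (add_le_add h1 h2)

lemma intervalIntegral_eq_zero_of_forall_le {ψ : ℝ → ℝ} {ε t : ℝ} (hψ : ∀ s ≤ ε, ψ s = 0)
    (hε : 0 ≤ ε) (ht : t ≤ ε) : ∫ s in (0 : ℝ)..t, ψ s = 0 := by
  rw [intervalIntegral.integral_congr (g := fun _ => 0) fun s hs =>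
    hψ s (hs.2.trans (max_le hε ht)), intervalIntegral.integral_zero]

lemma contDiff_one_of_hasDerivAt {G g : ℝ → ℝ} (hG : ∀ t, HasDerivAt G (g t) t)
    (hg : Continuous g) : ContDiff ℝ 1 G :=
  contDiff_one_iff_deriv.2
    ⟨fun t => (hG t).differentiableAt, by simpa [funext fun t => (hG t).deriv] using hg⟩

section Calculus

variable {E F : Type*} [NormedAddCommGroup E] [NormedSpace ℝ E] [NormedAddCommGroup F]
  [NormedSpace ℝ F] {U K : Set E} {g : E → F}

lemma ContDiffOn.contDiff_indicator {k : WithTop ℕ∞} (hg : ContDiffOn ℝ k g U) (hU : IsOpen U)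
    (hsupp : tsupport (U.indicator g) ⊆ U) : ContDiff ℝ k (U.indicator g) := by
  refine contDiff_iff_contDiffAt.2 fun x => ?_
  by_cases hx : x ∈ U
  · exact (hg.contDiffAt (hU.mem_nhds hx)).congr_of_eventuallyEq
      (Filter.eventuallyEq_of_mem (hU.mem_nhds hx) fun _ hy => indicator_of_mem hy g)
  · exact contDiffAt_const.congr_of_eventuallyEq
      (notMem_tsupport_iff_eventuallyEq.1 fun h => hx (hsupp h))

lemma fderiv_indicator_of_mem {x : E} (hU : IsOpen U) (hx : x ∈ U) :
    fderiv ℝ (U.indicator g) x = fderiv ℝ g x :=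
  Filter.EventuallyEq.fderiv_eq <|
    Filter.eventuallyEq_of_mem (hU.mem_nhds hx) fun _ hy => indicator_of_mem hy g

variable [MeasurableSpace E] [BorelSpace E] {μ : Measure E}

lemma integral_fderiv_apply_eq_zero [FiniteDimensional ℝ E] [μ.IsAddHaarMeasure] {h : E → ℝ}
    (hh : ContDiff ℝ 1 h) (hc : HasCompactSupport h) (v : E) : ∫ x, fderiv ℝ h x v ∂μ = 0 := by
  have hint : Integrable h μ := hh.continuous.integrable_of_hasCompactSupport hc
  have hint' : Integrable (fun x => fderiv ℝ h x v) μ :=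
    ((hh.continuous_fderiv one_ne_zero).clm_apply continuous_const).integrable_of_hasCompactSupport
      (hc.fderiv_apply (𝕜 := ℝ) v)
  simpa using integral_mul_fderiv_eq_neg_fderiv_mul_of_integrable (μ := μ) (v := v)
    (f := fun _ => (1 : ℝ)) (g := h) (by simp) (by simpa using hint') (by simpa using hint)
    (fun x _ => differentiableAt_const _) (fun x _ => (hh.differentiable one_ne_zero) x)

variable {f : E → ℝ}

lemma integrableOn_fderiv_apply_of_eq_zero_off [IsFiniteMeasureOnCompacts μ] (hU : IsOpen U)
    (hK : IsCompact K) (hKU : K ⊆ U) (hf : ContDiffOn ℝ 1 f U) (h0 : ∀ x ∈ U \ K, f x = 0) (v : E) :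
    IntegrableOn (fun x => fderiv ℝ f x v) U μ := by
  have hsupp := tsupport_indicator_subset hK.isClosed h0
  have hc : ContinuousOn (fun x => fderiv ℝ f x v) K :=
    ((hf.continuousOn_fderiv_of_isOpen hU le_rfl).clm_apply continuousOn_const).mono hKU
  refine integrableOn_of_eq_zero_off hU.measurableSet hK hc fun x hx => ?_
  rw [← fderiv_indicator_of_mem hU hx.1, fderiv_of_notMem_tsupport ℝ fun h => hx.2 (hsupp h)]
  rfl

lemma setIntegral_fderiv_apply_eq_zero [FiniteDimensional ℝ E] [μ.IsAddHaarMeasure]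
    (hU : IsOpen U) (hK : IsCompact K) (hKU : K ⊆ U) (hf : ContDiffOn ℝ 1 f U)
    (h0 : ∀ x ∈ U \ K, f x = 0) (v : E) :
    ∫ x in U, fderiv ℝ f x v ∂μ = 0 := by
  have hsupp := tsupport_indicator_subset hK.isClosed h0
  have heq : EqOn (fun x => fderiv ℝ (U.indicator f) x v) (fun x => fderiv ℝ f x v) U :=
    fun x hx => by simp only [fderiv_indicator_of_mem hU hx]
  rw [← setIntegral_congr_fun hU.measurableSet heq,
    setIntegral_eq_integral_of_forall_compl_eq_zero fun x hx => by
      simp [fderiv_of_notMem_tsupport ℝ fun h => hx (hKU (hsupp h))]]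
  exact integral_fderiv_apply_eq_zero (hf.contDiff_indicator hU (hsupp.trans hKU))
    (hK.of_isClosed_subset (isClosed_tsupport _) hsupp) v

end Calculus

lemma fderiv_comp_mul_fderiv_apply {E : Type*} [NormedAddCommGroup E] [NormedSpace ℝ E]
    {Ω : Set E} {u : E → ℝ} {g G : ℝ → ℝ} (hΩ : IsOpen Ω) (hu : ContDiffOn ℝ 2 u Ω)
    (hG : ∀ t, HasDerivAt G (g t) t) (v : E) {x : E} (hx : x ∈ Ω) :
    fderiv ℝ (fun y => G (u y) * fderiv ℝ u y v) x v =
      g (u x) * fderiv ℝ u x v ^ 2 + G (u x) * fderiv ℝ (fun y => fderiv ℝ u y v) x v := by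
  have hDu : ContDiffOn ℝ 1 (fderiv ℝ u) Ω := hu.fderiv_of_isOpen hΩ (by norm_num)
  have hu' : HasFDerivAt u (fderiv ℝ u x) x :=
    ((hu.contDiffAt (hΩ.mem_nhds hx)).differentiableAt (by norm_num)).hasFDerivAt
  have hB : HasFDerivAt (fun y => fderiv ℝ u y v) (fderiv ℝ (fun y => fderiv ℝ u y v) x) x :=
    ((hDu.differentiableOn one_ne_zero).differentiableAt (hΩ.mem_nhds hx)).clm_apply
      (differentiableAt_const _) |>.hasFDerivAt
  have hprod : HasFDerivAt (fun y => G (u y) * fderiv ℝ u y v) _ x :=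
    ((hG (u x)).comp_hasFDerivAt x hu').mul hB
  rw [hprod.fderiv]
  simp only [add_apply, smul_apply, smul_eq_mul, Function.comp_apply]
  ring

lemma norm_fderiv_indicator_comp_sq {E : Type*} [NormedAddCommGroup E] [NormedSpace ℝ E]
    {U : Set E} {u : E → ℝ} {ζ : ℝ → ℝ} {d : ℝ} {x : E} (hU : IsOpen U) (hx : x ∈ U)
    (hζ : HasDerivAt ζ d (u x)) (hu : DifferentiableAt ℝ u x) :
    ‖fderiv ℝ (U.indicator fun y => ζ (u y)) x‖ ^ 2 = d ^ 2 * ‖fderiv ℝ u x‖ ^ 2 := by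
  have hw : HasFDerivAt (fun y => ζ (u y)) (d • fderiv ℝ u x) x :=
    hζ.comp_hasFDerivAt x hu.hasFDerivAt
  rw [fderiv_indicator_of_mem hU hx, hw.fderiv, norm_smul, mul_pow, Real.norm_eq_abs, sq_abs]

section Mollification

variable {E : Type*} [NormedAddCommGroup E] [NormedSpace ℝ E]

lemma lsmul_precompR :
    (lsmul ℝ ℝ : ℝ →L[ℝ] ℝ →L[ℝ] ℝ).precompR E =
      (lsmul ℝ ℝ : ℝ →L[ℝ] (E →L[ℝ] ℝ) →L[ℝ] (E →L[ℝ] ℝ)) := by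
  ext
  simp [ContinuousLinearMap.precompR]

/-- The second variation of the energy at a solution of `-Δu = f(u)`, with `c = f'(u)`. -/
noncomputable def secondVariation [MeasurableSpace E] (μ : Measure E) (U : Set E) (c ξ : E → ℝ) :
    ℝ :=
  ∫ x in U, (‖fderiv ℝ ξ x‖ ^ 2 - c x * ξ x ^ 2) ∂μ

variable [FiniteDimensional ℝ E] [MeasurableSpace E] [BorelSpace E] {μ : Measure E}
  [μ.IsAddHaarMeasure]

namespace ContDiffBump

variable {E' : Type*} [NormedAddCommGroup E'] [NormedSpace ℝ E'] (φ : ContDiffBump (0 : E))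

lemma normed_convolution_eq_zero {g : E → E'} {δ : ℝ} (hδ : φ.rOut ≤ δ) {x : E}
    (hx : x ∉ cthickening δ (tsupport g)) : (φ.normed μ ⋆[lsmul ℝ ℝ, μ] g) x = 0 := by
  by_contra hne
  have hsupp := support_convolution_subset (L := lsmul ℝ ℝ) (μ := μ) hne
  rw [φ.support_normed_eq, ball_add_zero] at hsupp
  exact hx (thickening_subset_cthickening_of_le hδ _
    (thickening_subset_of_subset _ subset_closure hsupp))

lemma norm_normed_convolution_le [CompleteSpace E'] {g : E → E'} {M : ℝ}
    (hg : AEStronglyMeasurable g μ) (hM : ∀ x, ‖g x‖ ≤ M) (x : E) :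
    ‖(φ.normed μ ⋆[lsmul ℝ ℝ, μ] g) x‖ ≤ M := by
  simpa using dist_convolution_le (z₀ := 0) (x₀ := x) ((norm_nonneg _).trans (hM x))
    φ.support_normed_eq.subset φ.nonneg_normed φ.integral_normed hg fun y _ => by simpa using hM y

lemma hasFDerivAt_normed_convolution {w : E → ℝ} (hw : ContDiff ℝ 1 w) (hwc : HasCompactSupport w)
    (x : E) : HasFDerivAt (φ.normed μ ⋆[lsmul ℝ ℝ, μ] w)
      ((φ.normed μ ⋆[lsmul ℝ ℝ, μ] fderiv ℝ w) x) x := by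
  simpa [lsmul_precompR] using
    hwc.hasFDerivAt_convolution_right (lsmul ℝ ℝ) (φ.integrable_normed.locallyIntegrable) hw x

end ContDiffBump

variable {U : Set E} {c : E → ℝ} {M : ℝ}

lemma tendsto_secondVariation_normed_convolution {φ : ℕ → ContDiffBump (0 : E)} {δ : ℝ}
    (hφ : Tendsto (fun k => (φ k).rOut) atTop (𝓝 0)) (hδ : ∀ k, (φ k).rOut ≤ δ)
    (hcm : AEStronglyMeasurable c (μ.restrict U)) (hcM : ∀ᵐ x ∂μ.restrict U, |c x| ≤ M)
    {w : E → ℝ} (hw : ContDiff ℝ 1 w) (hwc : HasCompactSupport w) :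
    Tendsto (fun k => secondVariation μ U c ((φ k).normed μ ⋆[lsmul ℝ ℝ, μ] w)) atTop
      (𝓝 (secondVariation μ U c w)) := by
  set C := cthickening δ (tsupport w)
  have hw' : Continuous (fderiv ℝ w) := hw.continuous_fderiv one_ne_zero
  obtain ⟨A, hA⟩ := hw.continuous.bounded_above_of_compact_support hwc
  obtain ⟨B, hB⟩ := hw'.bounded_above_of_compact_support (hwc.fderiv (𝕜 := ℝ))
  set ξ := fun k => (φ k).normed μ ⋆[lsmul ℝ ℝ, μ] w
  set D := fun k => (φ k).normed μ ⋆[lsmul ℝ ℝ, μ] fderiv ℝ w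
  have hfderiv : ∀ k, fderiv ℝ (ξ k) = D k := fun k =>
    funext fun x => ((φ k).hasFDerivAt_normed_convolution (μ := μ) hw hwc x).fderiv
  have hbound : ∀ k, ∀ᵐ x ∂μ.restrict U,
      ‖‖D k x‖ ^ 2 - c x * ξ k x ^ 2‖ ≤ C.indicator (fun _ => B ^ 2 + M * A ^ 2) x := by
    refine fun k => hcM.mono fun x hx => ?_
    by_cases hxC : x ∈ C
    · rw [indicator_of_mem hxC, Real.norm_eq_abs]
      refine abs_sq_sub_mul_sq_le ?_ ?_ hx
      · rw [abs_norm]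
        exact (φ k).norm_normed_convolution_le hw'.aestronglyMeasurable hB x
      · exact (φ k).norm_normed_convolution_le hw.continuous.aestronglyMeasurable hA x
    · have hξ0 : ξ k x = 0 := (φ k).normed_convolution_eq_zero (hδ k) hxC
      have hD0 : D k x = 0 := (φ k).normed_convolution_eq_zero (hδ k) fun h =>
        hxC (cthickening_subset_of_subset _ (tsupport_fderiv_subset ℝ) h)
      simp [indicator_of_notMem hxC, hξ0, hD0]
  change Tendsto (fun k => secondVariation μ U c (ξ k)) atTop _
  simp only [secondVariation, hfderiv]
  refine tendsto_integral_of_dominated_convergence _ (fun k => ?_)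
    ((integrable_indicator_iff isClosed_cthickening.measurableSet).2
      (integrableOn_const (hwc.cthickening.measure_lt_top.ne)).restrict) hbound
    (ae_of_all _ fun x => ?_)
  · have hDc : Continuous (D k) := (hwc.fderiv (𝕜 := ℝ)).continuous_convolution_right _
      (φ k).integrable_normed.locallyIntegrable hw'
    have hξc : Continuous (ξ k) := Differentiable.continuous fun x =>
      ((φ k).hasFDerivAt_normed_convolution (μ := μ) hw hwc x).differentiableAt
    exact (hDc.norm.pow 2).aestronglyMeasurable.sub (hcm.mul (hξc.pow 2).aestronglyMeasurable)
  · exact ((ContDiffBump.convolution_tendsto_right_of_continuous hφ hw' x).norm.pow 2).sub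
      (((ContDiffBump.convolution_tendsto_right_of_continuous hφ hw.continuous x).pow 2).const_mul
        _)

theorem secondVariation_nonneg_of_contDiff_one (hU : IsOpen U)
    (hcm : AEStronglyMeasurable c (μ.restrict U)) (hcM : ∀ᵐ x ∂μ.restrict U, |c x| ≤ M)
    (hst : ∀ ξ : E → ℝ, ContDiff ℝ (⊤ : ℕ∞) ξ → HasCompactSupport ξ → tsupport ξ ⊆ U →
      0 ≤ secondVariation μ U c ξ)
    {w : E → ℝ} (hw : ContDiff ℝ 1 w) (hwc : HasCompactSupport w) (hwU : tsupport w ⊆ U) :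
    0 ≤ secondVariation μ U c w := by
  obtain ⟨δ, hδ, hδU⟩ := hwc.exists_cthickening_subset_open hU hwU
  let φ : ℕ → ContDiffBump (0 : E) := fun k =>
    ⟨δ / (k + 2), δ / (k + 1), by positivity, by gcongr; linarith⟩
  have hφ : Tendsto (fun k => (φ k).rOut) atTop (𝓝 0) :=
    tendsto_const_nhds.div_atTop (tendsto_atTop_add_const_right _ 1 tendsto_natCast_atTop_atTop)
  have hφδ : ∀ k, (φ k).rOut ≤ δ := fun k => div_le_self hδ.le (by simp)
  refine ge_of_tendsto' (tendsto_secondVariation_normed_convolution hφ hφδ hcm hcM hw hwc)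
    fun k => ?_
  have hsupp : tsupport ((φ k).normed μ ⋆[lsmul ℝ ℝ, μ] w) ⊆ cthickening δ (tsupport w) :=
    closure_minimal (fun x hx => by_contra fun h => hx ((φ k).normed_convolution_eq_zero (hφδ k) h))
      isClosed_cthickening
  exact hst _ ((φ k).hasCompactSupport_normed.contDiff_convolution_left _ (φ k).contDiff_normed
    hw.continuous.locallyIntegrable)
    (hwc.cthickening.of_isClosed_subset (isClosed_tsupport _) hsupp) (hsupp.trans hδU)

end Mollification

section Euclidean

variable {n : ℕ} {Ω K : Set (EuclideanSpace ℝ (Fin n))} {u : EuclideanSpace ℝ (Fin n) → ℝ}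

lemma norm_sq_eq_sum_apply_single (ℓ : EuclideanSpace ℝ (Fin n) →L[ℝ] ℝ) :
    ‖ℓ‖ ^ 2 = ∑ i, ℓ (EuclideanSpace.single i 1) ^ 2 := by
  set g := (InnerProductSpace.toDual ℝ (EuclideanSpace ℝ (Fin n))).symm ℓ
  have hg : ∀ i, ℓ (EuclideanSpace.single i 1) = g i := fun i => by
    rw [← InnerProductSpace.toDual_symm_apply, EuclideanSpace.inner_single_right]
    simp [g]
  rw [← (InnerProductSpace.toDual ℝ _).symm.norm_map, EuclideanSpace.norm_sq_eq]
  simp [hg, g]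

/-- Sum over `i` of the divergence theorem for `G(u) ∂ᵢu`. -/
theorem integral_mul_norm_fderiv_sq_eq {g G : ℝ → ℝ} (hΩ : IsOpen Ω) (hK : IsCompact K)
    (hKΩ : K ⊆ Ω) (hu : ContDiffOn ℝ 2 u Ω) (hg : Continuous g)
    (hG : ∀ t, HasDerivAt G (g t) t) (hG0 : ∀ x ∈ Ω \ K, G (u x) = 0)
    (hg0 : ∀ x ∈ Ω \ K, g (u x) = 0) :
    ∫ x in Ω, g (u x) * ‖fderiv ℝ u x‖ ^ 2 = ∫ x in Ω, G (u x) * -lap u x := by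
  have hGc : ContDiff ℝ 1 G := contDiff_one_of_hasDerivAt hG hg
  have hDu : ContDiffOn ℝ 1 (fderiv ℝ u) Ω := hu.fderiv_of_isOpen hΩ (by norm_num)
  set F : Fin n → EuclideanSpace ℝ (Fin n) → ℝ :=
    fun i y => G (u y) * fderiv ℝ u y (EuclideanSpace.single i 1)
  have hF : ∀ i, ContDiffOn ℝ 1 (F i) Ω := fun i =>
    (hGc.comp_contDiffOn (hu.of_le (by norm_num))).mul (hDu.clm_apply contDiffOn_const)
  have hF0 : ∀ i, ∀ x ∈ Ω \ K, F i x = 0 := fun i x hx => by simp [F, hG0 x hx]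
  have hsum : EqOn (fun x => ∑ i, fderiv ℝ (F i) x (EuclideanSpace.single i 1))
      (fun x => g (u x) * ‖fderiv ℝ u x‖ ^ 2 + G (u x) * lap u x) Ω := fun x hx => by
    simp only [F, fderiv_comp_mul_fderiv_apply hΩ hu hG _ hx, Finset.sum_add_distrib, lap,
      norm_sq_eq_sum_apply_single, Finset.mul_sum]
  have hint : IntegrableOn (fun x => ∑ i, fderiv ℝ (F i) x (EuclideanSpace.single i 1)) Ω :=
    integrable_finsetSum _ fun i _ =>
      integrableOn_fderiv_apply_of_eq_zero_off hΩ hK hKΩ (hF i) (hF0 i) _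
  have hzero : ∫ x in Ω, (g (u x) * ‖fderiv ℝ u x‖ ^ 2 + G (u x) * lap u x) = 0 := by
    rw [← setIntegral_congr_fun hΩ.measurableSet hsum, integral_finsetSum _ fun i _ =>
      integrableOn_fderiv_apply_of_eq_zero_off hΩ hK hKΩ (hF i) (hF0 i) _]
    exact Finset.sum_eq_zero fun i _ =>
      setIntegral_fderiv_apply_eq_zero hΩ hK hKΩ (hF i) (hF0 i) _
  have hint₁ : IntegrableOn (fun x => g (u x) * ‖fderiv ℝ u x‖ ^ 2) Ω :=
    integrableOn_of_eq_zero_off hΩ.measurableSet hK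
      (((hg.comp_continuousOn hu.continuousOn).mul (hDu.continuousOn.norm.pow 2)).mono hKΩ)
      fun x hx => by simp [hg0 x hx]
  have hint₂ : IntegrableOn (fun x => G (u x) * lap u x) Ω :=
    ((hint.congr_fun hsum hΩ.measurableSet).sub hint₁).congr_fun
      (fun x _ => by simp) hΩ.measurableSet
  rw [integral_add hint₁ hint₂] at hzero
  simp only [mul_neg, integral_neg]
  linarith

lemma closure_inter_preimage_Ici_subset {ε : ℝ} (hΩ : IsOpen Ω)
    (hbd : ∀ x ∈ frontier Ω, u x = 0) (hε : 0 < ε) : closure Ω ∩ u ⁻¹' Ici ε ⊆ Ω := by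
  rintro x ⟨hx, hxε⟩
  by_contra hxΩ
  have : u x = 0 := hbd x (by rw [hΩ.frontier_eq]; exact ⟨hx, hxΩ⟩)
  linarith [show ε ≤ u x from hxε]

lemma StableSol.secondVariation_nonneg {f' : ℝ → ℝ} (hst : StableSol f' u Ω)
    (ξ : EuclideanSpace ℝ (Fin n) → ℝ) (hξ : ContDiff ℝ (⊤ : ℕ∞) ξ) (hξc : HasCompactSupport ξ)
    (hξΩ : tsupport ξ ⊆ Ω) : 0 ≤ secondVariation volume Ω (fun x => f' (u x)) ξ := by
  simpa [secondVariation, gradient] using hst ξ hξ hξc hξΩ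

lemma le_of_mem_diff_closure_inter_preimage_Ici {ε : ℝ} {x : EuclideanSpace ℝ (Fin n)}
    (hx : x ∈ Ω \ (closure Ω ∩ u ⁻¹' Ici ε)) : u x ≤ ε :=
  le_of_lt (not_le.1 fun h => hx.2 ⟨subset_closure hx.1, h⟩)

lemma isCompact_closure_inter_preimage_Ici {ε : ℝ} (hΩb : IsBounded Ω)
    (hu : ContinuousOn u (closure Ω)) : IsCompact (closure Ω ∩ u ⁻¹' Ici ε) :=
  hΩb.isCompact_closure.of_isClosed_subset
    (hu.preimage_isClosed_of_isClosed isClosed_closure isClosed_Ici) inter_subset_left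

/-- Stability tested with `ζ(u)`, `ζ = ∫₀ ψ`, which is `C¹` and vanishes where `u ≤ ε`, hence
near `∂Ω`. -/
theorem StableSol.integral_mul_primitive_sq_le_integral {f' ψ : ℝ → ℝ} {ε M : ℝ}
    (hst : StableSol f' u Ω) (hΩ : IsOpen Ω) (hΩb : IsBounded Ω)
    (hu : ContinuousOn u (closure Ω)) (hu2 : ContDiffOn ℝ 2 u Ω)
    (hbd : ∀ x ∈ frontier Ω, u x = 0) (hc : ContinuousOn (fun x => f' (u x)) Ω)
    (hcM : ∀ x ∈ Ω, |f' (u x)| ≤ M) (hψ : Continuous ψ) (hε : 0 < ε)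
    (hψ0 : ∀ t ≤ ε, ψ t = 0) :
    ∫ x in Ω, f' (u x) * (∫ t in (0 : ℝ)..u x, ψ t) ^ 2 ≤
      ∫ x in Ω, ψ (u x) ^ 2 * ‖fderiv ℝ u x‖ ^ 2 := by
  set K := closure Ω ∩ u ⁻¹' Ici ε
  have hKΩ : K ⊆ Ω := closure_inter_preimage_Ici_subset hΩ hbd hε
  have hK : IsCompact K := isCompact_closure_inter_preimage_Ici hΩb hu
  have hlt : ∀ x ∈ Ω \ K, u x ≤ ε := fun x hx => le_of_mem_diff_closure_inter_preimage_Ici hx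
  set ζ : ℝ → ℝ := fun t => ∫ s in (0 : ℝ)..t, ψ s
  have hζ : ∀ t, HasDerivAt ζ (ψ t) t := fun t => (hψ.integral_hasStrictDerivAt 0 t).hasDerivAt
  have hζ0 : ∀ x ∈ Ω \ K, ζ (u x) = 0 := fun x hx =>
    intervalIntegral_eq_zero_of_forall_le hψ0 hε.le (hlt x hx)
  have hζC1 : ContDiff ℝ 1 ζ := contDiff_one_of_hasDerivAt hζ hψ
  have hw : ContDiffOn ℝ 1 (fun x => ζ (u x)) Ω := hζC1.comp_contDiffOn (hu2.of_le (by norm_num))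
  have hwK := tsupport_indicator_subset hK.isClosed hζ0
  have hstab := secondVariation_nonneg_of_contDiff_one hΩ
    (hc.aestronglyMeasurable hΩ.measurableSet)
    ((ae_restrict_iff' hΩ.measurableSet).2 (ae_of_all _ hcM)) hst.secondVariation_nonneg
    (hw.contDiff_indicator hΩ (hwK.trans hKΩ)) (hK.of_isClosed_subset (isClosed_tsupport _) hwK)
    (hwK.trans hKΩ)
  rw [secondVariation, setIntegral_congr_fun hΩ.measurableSet (g := fun x =>
    ψ (u x) ^ 2 * ‖fderiv ℝ u x‖ ^ 2 - f' (u x) * ζ (u x) ^ 2) fun x hx => by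
      simp only [norm_fderiv_indicator_comp_sq hΩ hx (hζ (u x))
        ((hu2.contDiffAt (hΩ.mem_nhds hx)).differentiableAt (by norm_num)),
        indicator_of_mem hx]] at hstab
  have hint₁ : IntegrableOn (fun x => ψ (u x) ^ 2 * ‖fderiv ℝ u x‖ ^ 2) Ω :=
    integrableOn_of_eq_zero_off hΩ.measurableSet hK
      (((hψ.comp_continuousOn hu2.continuousOn).pow 2 |>.mul
        ((hu2.continuousOn_fderiv_of_isOpen hΩ (by norm_num)).norm.pow 2)).mono hKΩ)
      fun x hx => by simp [hψ0 _ (hlt x hx)]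
  have hint₂ : IntegrableOn (fun x => f' (u x) * ζ (u x) ^ 2) Ω :=
    integrableOn_of_eq_zero_off hΩ.measurableSet hK
      ((hc.mul ((hζC1.continuous.comp_continuousOn hu2.continuousOn).pow 2)).mono hKΩ)
      fun x hx => by simp [hζ0 x hx]
  rw [integral_sub hint₁ hint₂] at hstab
  linarith

theorem StableSol.integral_mul_primitive_sq_le {f' ψ : ℝ → ℝ} {ε M : ℝ} (hst : StableSol f' u Ω)
    (hΩ : IsOpen Ω) (hΩb : IsBounded Ω) (hu : ContinuousOn u (closure Ω))
    (hu2 : ContDiffOn ℝ 2 u Ω) (hbd : ∀ x ∈ frontier Ω, u x = 0)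
    (hc : ContinuousOn (fun x => f' (u x)) Ω) (hcM : ∀ x ∈ Ω, |f' (u x)| ≤ M)
    (hψ : Continuous ψ) (hε : 0 < ε) (hψ0 : ∀ t ≤ ε, ψ t = 0) :
    ∫ x in Ω, f' (u x) * (∫ t in (0 : ℝ)..u x, ψ t) ^ 2 ≤
      ∫ x in Ω, (∫ t in (0 : ℝ)..u x, ψ t ^ 2) * -lap u x := by
  have hψ2 : Continuous fun t => ψ t ^ 2 := by fun_prop
  have hlt : ∀ x ∈ Ω \ (closure Ω ∩ u ⁻¹' Ici ε), u x ≤ ε := fun x hx =>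
    le_of_mem_diff_closure_inter_preimage_Ici hx
  rw [← integral_mul_norm_fderiv_sq_eq hΩ (isCompact_closure_inter_preimage_Ici hΩb hu)
    (closure_inter_preimage_Ici_subset hΩ hbd hε) hu2 hψ2
    (fun t => (hψ2.integral_hasStrictDerivAt 0 t).hasDerivAt)
    (fun x hx => intervalIntegral_eq_zero_of_forall_le (fun t ht => by simp [hψ0 t ht]) hε.le
      (hlt x hx)) fun x hx => by simp [hψ0 _ (hlt x hx)]]
  exact hst.integral_mul_primitive_sq_le_integral hΩ hΩb hu hu2 hbd hc hcM hψ hε hψ0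

end Euclidean

structure ConvexNonlinearity (f f' : ℝ → ℝ) : Prop where
  continuousOn : ContinuousOn f (Ico 0 1)
  hasDerivAt : ∀ t ∈ Ioo (0 : ℝ) 1, HasDerivAt f (f' t) t
  nonneg : ∀ t ∈ Ico (0 : ℝ) 1, 0 ≤ f t
  continuousOn_deriv : ContinuousOn f' (Ico 0 1)
  deriv_nonneg : ∀ t ∈ Ico (0 : ℝ) 1, 0 ≤ f' t
  monotoneOn_deriv : MonotoneOn f' (Ico 0 1)

lemma monotoneOn_Ico_of_hasDerivWithinAt {f f' : ℝ → ℝ} {a b : ℝ}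
    (hf : ∀ t ∈ Ico a b, HasDerivWithinAt f (f' t) (Ico a b) t)
    (hf' : ∀ t ∈ Ico a b, 0 ≤ f' t) : MonotoneOn f (Ico a b) :=
  monotoneOn_of_hasDerivWithinAt_nonneg (convex_Ico a b)
    (fun t ht => (hf t ht).continuousWithinAt)
    (fun t ht => by
      rw [interior_Ico] at ht ⊢
      exact ((hf t (Ioo_subset_Ico_self ht)).hasDerivAt (Ico_mem_nhds ht.1 ht.2)).hasDerivWithinAt)
    (fun t ht => hf' t (interior_subset ht))

lemma C2On01.convexNonlinearity {f f' f'' : ℝ → ℝ} (h : C2On01 f f' f'')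
    (hf : ∀ t ∈ Ico (0 : ℝ) 1, 0 ≤ f t) (hf' : ∀ t ∈ Ico (0 : ℝ) 1, 0 ≤ f' t)
    (hf'' : ∀ t ∈ Ico (0 : ℝ) 1, 0 ≤ f'' t) : ConvexNonlinearity f f' where
  continuousOn t ht := (h.1 t ht).continuousWithinAt
  hasDerivAt t ht := (h.1 t (Ioo_subset_Ico_self ht)).hasDerivAt (Ico_mem_nhds ht.1 ht.2)
  nonneg := hf
  continuousOn_deriv t ht := (h.2.1 t ht).continuousWithinAt
  deriv_nonneg := hf'
  monotoneOn_deriv := monotoneOn_Ico_of_hasDerivWithinAt h.2.1 hf''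

namespace ConvexNonlinearity

variable {f f' : ℝ → ℝ} {a b t : ℝ}

lemma monotoneOn (hf : ConvexNonlinearity f f') : MonotoneOn f (Ico 0 1) :=
  monotoneOn_of_deriv_nonneg (convex_Ico 0 1) hf.continuousOn
    (fun t ht => by
      rw [interior_Ico] at ht
      exact (hf.hasDerivAt t ht).differentiableAt.differentiableWithinAt)
    (fun t ht => by
      rw [interior_Ico] at ht
      exact (hf.hasDerivAt t ht).deriv ▸ hf.deriv_nonneg t (Ioo_subset_Ico_self ht))

lemma intervalIntegrable_deriv (hf : ConvexNonlinearity f f') (ha : 0 ≤ a) (hab : a ≤ b)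
    (hb : b < 1) : IntervalIntegrable f' volume a b :=
  (hf.continuousOn_deriv.mono (Icc_subset_Ico ha hb)).intervalIntegrable_of_Icc hab

lemma integral_deriv (hf : ConvexNonlinearity f f') (ha : 0 ≤ a) (hab : a ≤ b) (hb : b < 1) :
    ∫ s in a..b, f' s = f b - f a :=
  intervalIntegral.integral_eq_sub_of_hasDerivAt_of_le hab
    (hf.continuousOn.mono (Icc_subset_Ico ha hb))
    (fun s hs => hf.hasDerivAt s ⟨ha.trans_lt hs.1, hs.2.trans hb⟩)
    (hf.intervalIntegrable_deriv ha hab hb)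

lemma sub_le_deriv (hf : ConvexNonlinearity f f') (ht : t ∈ Ico (0 : ℝ) 1) :
    f t - f 0 ≤ f' t := by
  have hmono : ∫ s in (0 : ℝ)..t, f' s ≤ ∫ _ in (0 : ℝ)..t, f' t :=
    intervalIntegral.integral_mono_on ht.1 (hf.intervalIntegrable_deriv le_rfl ht.1 ht.2)
      intervalIntegrable_const fun s hs =>
        hf.monotoneOn_deriv (Icc_subset_Ico le_rfl ht.2 hs) ht hs.2
  rw [hf.integral_deriv le_rfl ht.1 ht.2, intervalIntegral.integral_const, smul_eq_mul,
    sub_zero] at hmono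
  nlinarith [hf.deriv_nonneg t ht, ht.2]

lemma tendsto_deriv (hf : ConvexNonlinearity f f') (hblow : Tendsto f (𝓝[<] 1) atTop) :
    Tendsto f' (𝓝[<] 1) atTop := by
  refine tendsto_atTop_mono' _ ?_ (tendsto_atTop_add_const_right _ (-f 0) hblow)
  filter_upwards [Ioo_mem_nhdsLT (zero_lt_one' ℝ)] with t ht
  exact hf.sub_le_deriv (Ioo_subset_Ico_self ht)

end ConvexNonlinearity

/-- `ψ` plays the role of `ζ'`, where `ζ(u)` is the test function of the stability argument. -/
structure IsTruncation (f' : ℝ → ℝ) (ε T : ℝ) (ψ : ℝ → ℝ) : Prop where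
  continuous : Continuous ψ
  eq_zero : ∀ t ≤ ε, ψ t = 0
  nonneg : ∀ t ∈ Icc 0 T, 0 ≤ ψ t
  le : ∀ t ∈ Icc 0 T, ψ t ≤ f' t
  eq : ∀ t ∈ Icc (2 * ε) T, ψ t = f' t

lemma ConvexNonlinearity.exists_isTruncation {f f' : ℝ → ℝ} {ε T : ℝ}
    (hf : ConvexNonlinearity f f') (hε : 0 < ε) (hT : 2 * ε ≤ T) (hT1 : T < 1) :
    ∃ ψ, IsTruncation f' ε T ψ := by
  set ramp : ℝ → ℝ := fun t => min 1 (max 0 ((t - ε) / ε))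
  set clamp : ℝ → ℝ := fun t => max ε (min t T)
  have hclamp : ∀ t, clamp t ∈ Ico (0 : ℝ) 1 := fun t =>
    ⟨hε.le.trans (le_max_left _ _), max_lt (by linarith) ((min_le_right _ _).trans_lt hT1)⟩
  have hramp0 : ∀ t ≤ ε, ramp t = 0 := fun t ht => by
    simp only [ramp, max_eq_left (div_nonpos_of_nonpos_of_nonneg (sub_nonpos.2 ht) hε.le),
      min_eq_right zero_le_one]
  have hclampt : ∀ t ∈ Icc ε T, clamp t = t := fun t ht => by
    simp only [clamp, min_eq_left ht.2, max_eq_right ht.1]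
  have hf'0 : ∀ t ∈ Icc 0 T, 0 ≤ f' t := fun t ht => hf.deriv_nonneg t ⟨ht.1, ht.2.trans_lt hT1⟩
  refine ⟨fun t => ramp t * f' (clamp t), ?_, fun t ht => by simp [hramp0 t ht], ?_, ?_, ?_⟩
  · exact (by fun_prop : Continuous ramp).mul
      (hf.continuousOn_deriv.comp_continuous (by fun_prop) hclamp)
  · exact fun t _ => mul_nonneg (by positivity) (hf.deriv_nonneg _ (hclamp t))
  · intro t ht
    rcases le_total t ε with htε | htε
    · simpa [hramp0 t htε] using hf'0 t ht
    · simp only [hclampt t ⟨htε, ht.2⟩]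
      exact mul_le_of_le_one_left (hf'0 t ht) (min_le_left _ _)
  · intro t ht
    have h1 : 1 ≤ (t - ε) / ε := by rw [le_div_iff₀ hε]; linarith [ht.1]
    simp only [ramp, hclampt t ⟨by linarith [ht.1], ht.2⟩, max_eq_right (zero_le_one.trans h1),
      min_eq_left h1, one_mul]

lemma mul_integral_sub_integral_sq {ψ : ℝ → ℝ} (hψ : Continuous ψ) (c t : ℝ) :
    c * (∫ s in (0 : ℝ)..t, ψ s) - ∫ s in (0 : ℝ)..t, ψ s ^ 2 =
      ∫ s in (0 : ℝ)..t, ψ s * (c - ψ s) := by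
  have hψ2 : Continuous fun s => ψ s ^ 2 := by fun_prop
  rw [← intervalIntegral.integral_const_mul, ← intervalIntegral.integral_sub
    ((hψ.intervalIntegrable _ _).const_mul c) (hψ2.intervalIntegrable _ _)]
  congr 1 with s
  ring

namespace IsTruncation

variable {f f' ψ : ℝ → ℝ} {ε s₀ T t : ℝ}

lemma primitive_nonneg (hψ : IsTruncation f' ε T ψ) (ht : t ∈ Icc 0 T) :
    0 ≤ ∫ s in (0 : ℝ)..t, ψ s :=
  intervalIntegral.integral_nonneg ht.1 fun s hs => hψ.nonneg s ⟨hs.1, hs.2.trans ht.2⟩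

lemma primitive_le_sub (hψ : IsTruncation f' ε T ψ) (hf : ConvexNonlinearity f f') (hT : T < 1)
    (ht : t ∈ Icc 0 T) : ∫ s in (0 : ℝ)..t, ψ s ≤ f t - f 0 := by
  rw [← hf.integral_deriv le_rfl ht.1 (ht.2.trans_lt hT)]
  exact intervalIntegral.integral_mono_on ht.1 (hψ.continuous.intervalIntegrable _ _)
    (hf.intervalIntegrable_deriv le_rfl ht.1 (ht.2.trans_lt hT))
    fun s hs => hψ.le s ⟨hs.1, hs.2.trans ht.2⟩

lemma sub_primitive_le (hψ : IsTruncation f' ε T ψ) (hf : ConvexNonlinearity f f') (hε : 0 ≤ ε)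
    (h2ε : 2 * ε ≤ T) (hT : T < 1) (ht : t ∈ Icc 0 T) :
    f t - ∫ s in (0 : ℝ)..t, ψ s ≤ f (2 * ε) := by
  rcases le_total t (2 * ε) with ht2ε | ht2ε
  · linarith [hψ.primitive_nonneg ht,
      hf.monotoneOn ⟨ht.1, ht.2.trans_lt hT⟩ ⟨by positivity, h2ε.trans_lt hT⟩ ht2ε]
  · have hsplit := intervalIntegral.integral_add_adjacent_intervals
      (hψ.continuous.intervalIntegrable (μ := volume) 0 (2 * ε))
      (hψ.continuous.intervalIntegrable (2 * ε) t)
    have htail : ∫ s in (2 * ε)..t, ψ s = f t - f (2 * ε) := by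
      rw [← hf.integral_deriv (by positivity) ht2ε (ht.2.trans_lt hT)]
      refine intervalIntegral.integral_congr fun s hs => ?_
      rw [uIcc_of_le ht2ε] at hs
      exact hψ.eq s ⟨hs.1, hs.2.trans ht.2⟩
    linarith [hψ.primitive_nonneg ⟨by positivity, h2ε⟩]

lemma mul_sub_nonneg (hψ : IsTruncation f' ε T ψ) (hf : ConvexNonlinearity f f') (hT : T < 1)
    (ht : t ≤ T) {s : ℝ} (hs : s ∈ Icc 0 t) : 0 ≤ ψ s * (f' t - ψ s) := by
  have hsT : s ∈ Icc 0 T := ⟨hs.1, hs.2.trans ht⟩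
  have := hf.monotoneOn_deriv ⟨hs.1, hsT.2.trans_lt hT⟩ ⟨hs.1.trans hs.2, ht.trans_lt hT⟩ hs.2
  exact mul_nonneg (hψ.nonneg s hsT) (by linarith [hψ.le s hsT])

lemma primitive_sq_le (hψ : IsTruncation f' ε T ψ) (hf : ConvexNonlinearity f f') (hT : T < 1)
    (ht : t ∈ Icc 0 T) : ∫ s in (0 : ℝ)..t, ψ s ^ 2 ≤ f' t * ∫ s in (0 : ℝ)..t, ψ s := by
  rw [← sub_nonneg, mul_integral_sub_integral_sq hψ.continuous]
  exact intervalIntegral.integral_nonneg ht.1 fun s hs => hψ.mul_sub_nonneg hf hT ht.2 hs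

/-- Once `f'` has doubled, the integrand `ψ (f' t - ψ)` is at least `f' t / 2 * f'` on
`[2ε, s₀]`, where `ψ = f'`. -/
lemma primitive_sq_add_le (hψ : IsTruncation f' ε T ψ) (hf : ConvexNonlinearity f f')
    (hε : 0 ≤ ε) (hs₀ : 2 * ε ≤ s₀) (hs₀t : s₀ ≤ t) (htT : t ≤ T) (hT : T < 1)
    (hder : 2 * f' s₀ ≤ f' t) :
    (∫ s in (0 : ℝ)..t, ψ s ^ 2) + (f s₀ - f (2 * ε)) * (f' t / 2) ≤
      f' t * ∫ s in (0 : ℝ)..t, ψ s := by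
  have hs₀1 : s₀ < 1 := (hs₀t.trans htT).trans_lt hT
  have hint : Continuous fun s => ψ s * (f' t - ψ s) :=
    hψ.continuous.mul (continuous_const.sub hψ.continuous)
  have hmid : ∫ s in (2 * ε)..s₀, ψ s * (f' t - ψ s) ≤ ∫ s in (0 : ℝ)..t, ψ s * (f' t - ψ s) :=
    intervalIntegral.integral_mono_interval (by positivity) hs₀ hs₀t
      ((ae_restrict_iff' measurableSet_Ioc).2 (ae_of_all _ fun s hs =>
        hψ.mul_sub_nonneg hf hT htT (Ioc_subset_Icc_self hs))) (hint.intervalIntegrable _ _)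
  have hlow : (f s₀ - f (2 * ε)) * (f' t / 2) ≤ ∫ s in (2 * ε)..s₀, ψ s * (f' t - ψ s) := by
    rw [← hf.integral_deriv (by positivity) hs₀ hs₀1, ← intervalIntegral.integral_mul_const]
    refine intervalIntegral.integral_mono_on hs₀
      ((hf.intervalIntegrable_deriv (by positivity) hs₀ hs₀1).mul_const _)
      (hint.intervalIntegrable _ _) fun s hs => ?_
    have hsI : s ∈ Ico (0 : ℝ) 1 := ⟨by linarith [hs.1], hs.2.trans_lt hs₀1⟩
    have := hf.monotoneOn_deriv hsI ⟨by linarith, hs₀1⟩ hs.2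
    rw [hψ.eq s ⟨hs.1, by linarith [hs.2]⟩]
    nlinarith [hf.deriv_nonneg s hsI]
  linarith [mul_integral_sub_integral_sq hψ.continuous (f' t) t]

end IsTruncation

/-- The constants, depending only on `f`, of the final bound `2 f'(t₀) f(t₀) |Ω|`. -/
structure Thresholds (f f' : ℝ → ℝ) (ε s₀ t₀ : ℝ) : Prop where
  pos : 0 < ε
  two_mul_lt_s₀ : 2 * ε < s₀
  s₀_lt_t₀ : s₀ < t₀
  t₀_lt_one : t₀ < 1
  gap : f (2 * ε) ≤ f 0 + 1
  jump : 4 * (f 0 + 1) ≤ f s₀ - f (2 * ε)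
  deriv_doubles : 2 * f' s₀ ≤ f' t₀

lemma ConvexNonlinearity.exists_thresholds {f f' : ℝ → ℝ} (hf : ConvexNonlinearity f f')
    (hblow : Tendsto f (𝓝[<] 1) atTop) : ∃ ε s₀ t₀, Thresholds f f' ε s₀ t₀ := by
  have hcont : Tendsto f (𝓝[>] 0) (𝓝 (f 0)) :=
    (hf.continuousOn 0 ⟨le_rfl, one_pos⟩).tendsto.mono_left (nhdsWithin_le_of_mem
      (mem_of_superset (Ioo_mem_nhdsGT one_pos) Ioo_subset_Ico_self))
  obtain ⟨r, hr, hr0, hr1⟩ := ((hcont.eventually (eventually_le_nhds (lt_add_one _))).and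
    (Ioo_mem_nhdsGT (zero_lt_one' ℝ))).exists
  obtain ⟨s₀, hs₀, hs₀r, hs₀1⟩ := ((hblow.eventually (eventually_ge_atTop (5 * (f 0 + 1)))).and
    (Ioo_mem_nhdsLT hr1)).exists
  obtain ⟨t₀, ht₀, ht₀s, ht₀1⟩ := (((hf.tendsto_deriv hblow).eventually
    (eventually_ge_atTop (2 * f' s₀))).and (Ioo_mem_nhdsLT hs₀1)).exists
  refine ⟨r / 2, s₀, t₀, ⟨by positivity, by linarith, ht₀s, ht₀1, ?_, ?_, ht₀⟩⟩ <;>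
    rw [mul_div_cancel₀ r two_ne_zero] <;> linarith

namespace Thresholds

variable {f f' ψ : ℝ → ℝ} {ε s₀ t₀ T t : ℝ}

lemma two_mul_lt_t₀ (hθ : Thresholds f f' ε s₀ t₀) : 2 * ε < t₀ :=
  hθ.two_mul_lt_s₀.trans hθ.s₀_lt_t₀

lemma t₀_mem_Ico (hθ : Thresholds f f' ε s₀ t₀) : t₀ ∈ Ico (0 : ℝ) 1 :=
  ⟨by linarith [hθ.pos, hθ.two_mul_lt_t₀], hθ.t₀_lt_one⟩

lemma pointwise_le (hθ : Thresholds f f' ε s₀ t₀) (hf : ConvexNonlinearity f f')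
    (hψ : IsTruncation f' ε T ψ) (ht₀T : t₀ ≤ T) (hT : T < 1) (ht : t ∈ Icc 0 T) :
    f t * (∫ s in (0 : ℝ)..t, ψ s ^ 2) + 2 * (f 0 + 1) * (Ici t₀).indicator (fun t => f' t * f t) t
      ≤ f' t * (∫ s in (0 : ℝ)..t, ψ s) ^ 2 + (f 0 + 1) * (f' t * f t) := by
  have htI : t ∈ Ico (0 : ℝ) 1 := ⟨ht.1, ht.2.trans_lt hT⟩
  set ζ := ∫ s in (0 : ℝ)..t, ψ s
  set φ := ∫ s in (0 : ℝ)..t, ψ s ^ 2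
  set K := f 0 + 1
  have hf't := hf.deriv_nonneg t htI
  have hft := hf.nonneg t htI
  have hζf : ζ ≤ f t := by linarith [hψ.primitive_le_sub hf hT ht, hf.nonneg 0 ⟨le_rfl, one_pos⟩]
  have hgap : f t - ζ ≤ K :=
    (hψ.sub_primitive_le hf hθ.pos.le (hθ.two_mul_lt_t₀.le.trans ht₀T) hT ht).trans hθ.gap
  have hsq : f t * (f' t * ζ) ≤ f' t * ζ ^ 2 + K * (f' t * f t) := by
    have h1 := mul_le_mul_of_nonneg_left hgap (mul_nonneg hf't (hψ.primitive_nonneg ht))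
    have h2 := mul_le_mul_of_nonneg_left hζf hf't
    nlinarith
  by_cases ht₀ : t₀ ≤ t
  · have hder : 2 * f' s₀ ≤ f' t :=
      hθ.deriv_doubles.trans (hf.monotoneOn_deriv hθ.t₀_mem_Ico htI ht₀)
    have hkey : φ + 2 * K * f' t ≤ f' t * ζ := by
      have := hψ.primitive_sq_add_le hf hθ.pos.le hθ.two_mul_lt_s₀.le
        (hθ.s₀_lt_t₀.le.trans ht₀) ht.2 hT hder
      nlinarith [mul_le_mul_of_nonneg_right hθ.jump (by positivity : 0 ≤ f' t / 2)]
    rw [indicator_of_mem (mem_Ici.2 ht₀)]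
    nlinarith [mul_le_mul_of_nonneg_left hkey hft]
  · rw [indicator_of_notMem (by simpa using ht₀)]
    nlinarith [mul_le_mul_of_nonneg_left (hψ.primitive_sq_le hf hT ht) hft]

end Thresholds

section Euclidean

variable {n : ℕ} {Ω : Set (EuclideanSpace ℝ (Fin n))} {u : EuclideanSpace ℝ (Fin n) → ℝ}

lemma exists_forall_le_lt_one (hΩ : IsOpen Ω) (hΩb : IsBounded Ω)
    (hu : ContinuousOn u (closure Ω)) (hu1 : ∀ x ∈ Ω, u x < 1)
    (hbd : ∀ x ∈ frontier Ω, u x = 0) {t₀ : ℝ} (ht₀ : t₀ < 1) :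
    ∃ T, t₀ ≤ T ∧ T < 1 ∧ ∀ x ∈ Ω, u x ≤ T := by
  obtain ⟨T, ht₀T, hT1, huT⟩ := hΩb.isCompact_closure.exists_forall_le_lt hu ht₀ fun x hx => by
    by_cases hxΩ : x ∈ Ω
    · exact hu1 x hxΩ
    · rw [hbd x ⟨hx, by rwa [hΩ.interior_eq]⟩]; exact one_pos
  exact ⟨T, ht₀T, hT1, fun x hx => huT x (subset_closure hx)⟩

lemma measurableSet_inter_preimage_Ici (hΩ : IsOpen Ω) (hu : ContinuousOn u (closure Ω))
    (a : ℝ) : MeasurableSet (Ω ∩ u ⁻¹' Ici a) := by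
  convert hΩ.measurableSet.inter
    (hu.preimage_isClosed_of_isClosed isClosed_closure isClosed_Ici).measurableSet using 1
  ext x
  exact ⟨fun h => ⟨h.1, subset_closure h.1, h.2⟩, fun h => ⟨h.1, h.2.2⟩⟩

variable {f f' ψ : ℝ → ℝ} {ε s₀ t₀ T : ℝ}

theorem StableSol.integral_mul_primitive_sq_le_of_isTruncation (hst : StableSol f' u Ω)
    (hf : ConvexNonlinearity f f') (hψ : IsTruncation f' ε T ψ) (hε : 0 < ε) (hT1 : T < 1)
    (hΩ : IsOpen Ω) (hΩb : IsBounded Ω) (hu : ContinuousOn u (closure Ω))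
    (hu2 : ContDiffOn ℝ 2 u Ω) (hmaps : MapsTo u Ω (Icc 0 T))
    (heq : ∀ x ∈ Ω, -lap u x = f (u x)) (hbd : ∀ x ∈ frontier Ω, u x = 0) :
    ∫ x in Ω, f' (u x) * (∫ t in (0 : ℝ)..u x, ψ t) ^ 2 ≤
      ∫ x in Ω, (∫ t in (0 : ℝ)..u x, ψ t ^ 2) * f (u x) := by
  have hIcc : Icc 0 T ⊆ Ico (0 : ℝ) 1 := Icc_subset_Ico le_rfl hT1
  have hrhs : ∫ x in Ω, (∫ t in (0 : ℝ)..u x, ψ t ^ 2) * -lap u x =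
      ∫ x in Ω, (∫ t in (0 : ℝ)..u x, ψ t ^ 2) * f (u x) :=
    setIntegral_congr_fun hΩ.measurableSet fun x hx => by simp only [heq x hx]
  rw [← hrhs]
  refine hst.integral_mul_primitive_sq_le (M := f' T) hΩ hΩb hu hu2 hbd
    (hf.continuousOn_deriv.comp hu2.continuousOn fun x hx => hIcc (hmaps hx))
    (fun x hx => ?_) hψ.continuous hε hψ.eq_zero
  rw [abs_of_nonneg (hf.deriv_nonneg _ (hIcc (hmaps hx)))]
  exact hf.monotoneOn_deriv (hIcc (hmaps hx)) (hIcc ⟨(hmaps hx).1.trans (hmaps hx).2, le_rfl⟩)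
    (hmaps hx).2

theorem Thresholds.setIntegral_le_of_isTruncation (hθ : Thresholds f f' ε s₀ t₀)
    (hf : ConvexNonlinearity f f') (hψ : IsTruncation f' ε T ψ) (ht₀T : t₀ ≤ T) (hT1 : T < 1)
    (hΩ : IsOpen Ω) (hΩb : IsBounded Ω) (hu : ContinuousOn u (closure Ω))
    (hu2 : ContDiffOn ℝ 2 u Ω) (hmaps : MapsTo u Ω (Icc 0 T))
    (heq : ∀ x ∈ Ω, -lap u x = f (u x)) (hbd : ∀ x ∈ frontier Ω, u x = 0)
    (hst : StableSol f' u Ω) :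
    ∫ x in Ω, f' (u x) * f (u x) ≤ 2 * (f' t₀ * f t₀) * volume.real Ω := by
  have hIcc : Icc 0 T ⊆ Ico (0 : ℝ) 1 := Icc_subset_Ico le_rfl hT1
  have ht₀ := hθ.t₀_mem_Ico
  have hfc := hf.continuousOn.mono hIcc
  have hf'c := hf.continuousOn_deriv.mono hIcc
  have hζc : Continuous fun t => ∫ s in (0 : ℝ)..t, ψ s :=
    intervalIntegral.continuous_primitive (hψ.continuous.intervalIntegrable · ·) 0
  have hφc : Continuous fun t => ∫ s in (0 : ℝ)..t, ψ s ^ 2 :=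
    intervalIntegral.continuous_primitive ((hψ.continuous.pow 2).intervalIntegrable · ·) 0
  have hμΩ : volume Ω ≠ ⊤ := (measure_mono subset_closure).trans_lt
    hΩb.isCompact_closure.measure_lt_top |>.ne
  have : IsFiniteMeasure (volume.restrict Ω) := isFiniteMeasure_restrict.2 hμΩ
  have hint := fun {φ : ℝ → ℝ} (hφ : ContinuousOn φ (Icc 0 T)) =>
    integrableOn_comp_of_mapsTo (μ := volume) hΩ.measurableSet hμΩ isCompact_Icc hφ
      hu2.continuousOn hmaps
  have hstab := hst.integral_mul_primitive_sq_le_of_isTruncation hf hψ hθ.pos hT1 hΩ hΩb hu hu2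
    hmaps heq hbd
  have key := integral_le_of_indicator_le (μ := volume.restrict Ω) (K := f 0 + 1)
    (a := fun x => f' (u x) * f (u x)) (measurableSet_inter_preimage_Ici hΩ hu t₀)
    (hint (φ := fun t => f' t * f t) (hf'c.mul hfc))
    (hint (φ := fun t => f' t * (∫ s in (0 : ℝ)..t, ψ s) ^ 2) (hf'c.mul (hζc.continuousOn.pow 2)))
    (hint (φ := fun t => (∫ s in (0 : ℝ)..t, ψ s ^ 2) * f t) (hφc.continuousOn.mul hfc))
    (by linarith [hf.nonneg 0 ⟨le_rfl, one_pos⟩])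
    (mul_nonneg (hf.deriv_nonneg _ ht₀) (hf.nonneg _ ht₀)) hstab
    ((ae_restrict_iff' hΩ.measurableSet).2 (ae_of_all _ fun x hx => by
      have hind : (Ω ∩ u ⁻¹' Ici t₀).indicator (fun x => f' (u x) * f (u x)) x =
          (Ici t₀).indicator (fun t => f' t * f t) (u x) := by
        by_cases h : t₀ ≤ u x <;> simp [hx, h]
      rw [hind]
      linarith [hθ.pointwise_le hf hψ ht₀T hT1 (hmaps hx)]))
    ((ae_restrict_iff' hΩ.measurableSet).2 (ae_of_all _ fun x hx hxA => by
      have hux : u x ≤ t₀ := le_of_lt (not_le.1 fun h => hxA ⟨hx, h⟩)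
      exact mul_le_mul (hf.monotoneOn_deriv (hIcc (hmaps hx)) ht₀ hux)
        (hf.monotoneOn (hIcc (hmaps hx)) ht₀ hux) (hf.nonneg _ (hIcc (hmaps hx)))
        (hf.deriv_nonneg _ ht₀)))
  rwa [measureReal_restrict_apply_univ] at key

theorem Thresholds.setIntegral_le (hθ : Thresholds f f' ε s₀ t₀) (hf : ConvexNonlinearity f f')
    (hΩ : IsOpen Ω) (hΩb : IsBounded Ω) (hu : ContinuousOn u (closure Ω))
    (hu2 : ContDiffOn ℝ 2 u Ω) (hrange : ∀ x ∈ Ω, 0 ≤ u x ∧ u x < 1)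
    (heq : ∀ x ∈ Ω, -lap u x = f (u x)) (hbd : ∀ x ∈ frontier Ω, u x = 0)
    (hst : StableSol f' u Ω) :
    ∫ x in Ω, f' (u x) * f (u x) ≤ 2 * (f' t₀ * f t₀) * volume.real Ω := by
  obtain ⟨T, ht₀T, hT1, huT⟩ :=
    exists_forall_le_lt_one hΩ hΩb hu (fun x hx => (hrange x hx).2) hbd hθ.t₀_lt_one
  obtain ⟨ψ, hψ⟩ := hf.exists_isTruncation hθ.pos (hθ.two_mul_lt_t₀.le.trans ht₀T) hT1
  exact hθ.setIntegral_le_of_isTruncation hf hψ ht₀T hT1 hΩ hΩb hu hu2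
    (fun x hx => ⟨(hrange x hx).1, huT x hx⟩) heq hbd hst

end Euclidean

/-- The Nedev/Ye–Zhou estimate: if `u` is a stable solution of the Dirichlet
problem `-Δu = f(u)` in a smooth bounded domain `Ω`, `u = 0` on `∂Ω`, with `f ≥ 0`, `f' ≥ 0`,
`f'' ≥ 0` and `f(1⁻) = +∞`, then `∫_Ω f'(u) f(u) ≤ C` with `C` depending only on `f` and the
Lebesgue measure of `Ω`. -/
theorem stmt11 (f f' f'' : ℝ → ℝ)
    (hC2 : C2On01 f f' f'')
    (hf0 : ∀ t ∈ Ico (0:ℝ) 1, 0 ≤ f t)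
    (hf'0 : ∀ t ∈ Ico (0:ℝ) 1, 0 ≤ f' t)
    (hf''0 : ∀ t ∈ Ico (0:ℝ) 1, 0 ≤ f'' t)
    (hblow : Tendsto f (𝓝[<] (1:ℝ)) atTop)
    (V : ENNReal) :
    ∃ C : ℝ,
      ∀ (n : ℕ) (Ω : Set (EuclideanSpace ℝ (Fin n))) (u : EuclideanSpace ℝ (Fin n) → ℝ),
        SmoothBoundedDomain Ω → volume Ω = V →
        ContinuousOn u (closure Ω) → ContDiffOn ℝ 2 u Ω →
        (∀ x ∈ Ω, 0 ≤ u x ∧ u x < 1) →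
        (∀ x ∈ Ω, -lap u x = f (u x)) →
        (∀ x ∈ frontier Ω, u x = 0) →
        StableSol f' u Ω →
        ∫ x in Ω, f' (u x) * f (u x) ≤ C := by
  have hf := hC2.convexNonlinearity hf0 hf'0 hf''0
  obtain ⟨ε, s₀, t₀, hθ⟩ := hf.exists_thresholds hblow
  refine ⟨2 * (f' t₀ * f t₀) * V.toReal, fun n Ω u hdom hvol hu hu2 hrange heq hbd hst => ?_⟩
  have := hθ.setIntegral_le hf hdom.1 hdom.2.1 hu hu2 hrange heq hbd hst
  rwa [measureReal_def, hvol] at this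
end

section
/- Let f ∈ C²([0,1)) satisfy f ≥ 0, f′ ≥ 0, f″ ≥ 0, and lim_{t→1⁻} f(t) = +∞. Set f̃(t) = f(t) − f(0) and ψ(t) = ∫₀ᵗ f′(s)² ds. Then lim_{t→1⁻} [ f′(t) f̃(t)² − f(t) ψ(t) ] / [ f′(t) f(t) ] = +∞. -/
open MeasureTheory Set Filter Topology

lemma stmt12_aux (a a₀ F G₀ c P K M : ℝ)
    (hc : 0 ≤ c) (ha₀ : 0 ≤ a₀) (hK : 0 ≤ K) (hMK : M ≤ K)
    (hF : 2*c + 1 ≤ F)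
    (ha : 2*a₀ + 1 ≤ a)
    (hG₀ : 4*(K + c + 1) ≤ G₀)
    (hI1 : P ≤ a * (F - c))
    (hI2 : G₀ * (a - a₀) ≤ a * (F - c) - P) :
    M * (a * F) ≤ a * (F - c)^2 - F * P := by
  have hG : (F + 1)/2 ≤ F - c := by linarith
  have hG0 : 0 ≤ F - c := by linarith
  have ha1 : (1:ℝ) ≤ a := by linarith
  have haa : (a+1)/2 ≤ a - a₀ := by linarith
  have hG₀0 : 0 ≤ G₀ := by linarith
  -- N = a*G^2 - F*P = G*(a*G - P) - c*P
  have h1 : (F - c) * (G₀ * (a - a₀)) - c * P ≤ a * (F - c)^2 - F * P := by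
    nlinarith [mul_le_mul_of_nonneg_left hI2 hG0]
  have h2 : M * (a * F) ≤ (F - c) * (G₀ * (a - a₀)) - c * P := by
    have hP : P ≤ a * (F - c) := hI1
    have key : K * (a * F) + c * (a * (F - c)) ≤ (F - c) * (G₀ * (a - a₀)) := by
      nlinarith [mul_le_mul haa hG₀ (by linarith : (0:ℝ) ≤ 4*(K+c+1)) (by linarith : (0:ℝ) ≤ a - a₀),
        mul_le_mul hG (le_refl (4*(K+c+1))) (by linarith) hG0,
        mul_nonneg (mul_nonneg hG0 hG₀0) (by linarith : (0:ℝ) ≤ a - a₀),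
        mul_nonneg hK (mul_nonneg (by linarith : (0:ℝ) ≤ a) (by linarith : (0:ℝ) ≤ F - 1)),
        mul_nonneg hc (by linarith : (0:ℝ) ≤ a - 1)]
    have : M * (a * F) ≤ K * (a * F) := by
      apply mul_le_mul_of_nonneg_right hMK
      nlinarith [mul_le_mul ha1 (by linarith : (1:ℝ) ≤ F) zero_le_one (by linarith : (0:ℝ) ≤ a)]
    nlinarith [mul_le_mul_of_nonneg_left hP hc]
  linarith

/-- For `f ∈ C²([0,1))` with `f ≥ 0`, `f' ≥ 0`, `f'' ≥ 0` and
`f(t) → +∞` as `t → 1⁻`, setting `f̃ = f - f(0)` and `ψ(t) = ∫₀ᵗ f'(s)² ds`, one has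
`(f' f̃² - f ψ)/(f' f) → +∞` as `t → 1⁻`. -/
theorem stmt12 (f f' f'' : ℝ → ℝ)
    (hC2 : C2On01 f f' f'')
    (hf0 : ∀ t ∈ Ico (0:ℝ) 1, 0 ≤ f t)
    (hf'0 : ∀ t ∈ Ico (0:ℝ) 1, 0 ≤ f' t)
    (hf''0 : ∀ t ∈ Ico (0:ℝ) 1, 0 ≤ f'' t)
    (hblow : Tendsto f (𝓝[<] (1:ℝ)) atTop) :
    Tendsto (fun t =>
        (f' t * (f t - f 0) ^ 2 - f t * ∫ s in (0:ℝ)..t, f' s ^ 2) / (f' t * f t))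
      (𝓝[<] (1:ℝ)) atTop := by
  obtain ⟨hfd, hf'd, _⟩ := hC2
  have hIcc : ∀ {t : ℝ}, t ∈ Ico (0:ℝ) 1 → Icc (0:ℝ) t ⊆ Ico (0:ℝ) 1 := by
    intro t ht x hx; exact ⟨hx.1, lt_of_le_of_lt hx.2 ht.2⟩
  have hcontf' : ContinuousOn f' (Ico (0:ℝ) 1) :=
    fun x hx => (hf'd x hx).continuousWithinAt
  have hcontf : ContinuousOn f (Ico (0:ℝ) 1) :=
    fun x hx => (hfd x hx).continuousWithinAt
  -- f' is monotone on [0,1)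
  have hmono : MonotoneOn f' (Ico (0:ℝ) 1) := by
    apply monotoneOn_of_deriv_nonneg (convex_Ico 0 1) hcontf'
    · intro x hx
      rw [interior_Ico] at hx
      exact ((hf'd x (Ioo_subset_Ico_self hx)).hasDerivAt
        (Ico_mem_nhds hx.1 hx.2)).differentiableAt.differentiableWithinAt
    · intro x hx
      rw [interior_Ico] at hx
      rw [((hf'd x (Ioo_subset_Ico_self hx)).hasDerivAt (Ico_mem_nhds hx.1 hx.2)).deriv]
      exact hf''0 x (Ioo_subset_Ico_self hx)
  -- integrability
  have hint : ∀ t ∈ Ico (0:ℝ) 1, IntervalIntegrable f' volume 0 t := fun t ht =>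
    (hcontf'.mono (hIcc ht)).intervalIntegrable_of_Icc ht.1
  have hint2 : ∀ t ∈ Ico (0:ℝ) 1, IntervalIntegrable (fun s => f' s ^ 2) volume 0 t :=
    fun t ht => (((hcontf'.mono (hIcc ht)).pow 2).intervalIntegrable_of_Icc ht.1)
  -- FTC
  have ftc : ∀ t ∈ Ico (0:ℝ) 1, ∫ s in (0:ℝ)..t, f' s = f t - f 0 := by
    intro t ht
    apply intervalIntegral.integral_eq_sub_of_hasDeriv_right_of_le ht.1
      (hcontf.mono (hIcc ht)) _ (hint t ht)
    intro x hx
    have hx' : x ∈ Ico (0:ℝ) 1 := ⟨hx.1.le, hx.2.trans ht.2⟩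
    exact ((hfd x hx').hasDerivAt (Ico_mem_nhds hx.1 (hx.2.trans ht.2))).hasDerivWithinAt
  have h01 : (0:ℝ) ∈ Ico (0:ℝ) 1 := ⟨le_refl 0, one_pos⟩
  have hc : 0 ≤ f 0 := hf0 0 h01
  -- f' t ≥ f t - f 0
  have hflb : ∀ t ∈ Ico (0:ℝ) 1, f t - f 0 ≤ f' t := by
    intro t ht
    rw [← ftc t ht]
    calc ∫ s in (0:ℝ)..t, f' s ≤ ∫ _ in (0:ℝ)..t, f' t := by
          apply intervalIntegral.integral_mono_on ht.1 (hint t ht)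
            intervalIntegrable_const
          intro x hx
          exact hmono (hIcc ht hx) ht (hx.2)
      _ = t * f' t := by simp
      _ ≤ 1 * f' t := mul_le_mul_of_nonneg_right ht.2.le (hf'0 t ht)
      _ = f' t := one_mul _
  -- I1
  have hI1 : ∀ t ∈ Ico (0:ℝ) 1, (∫ s in (0:ℝ)..t, f' s ^ 2) ≤ f' t * (f t - f 0) := by
    intro t ht
    rw [← ftc t ht, ← intervalIntegral.integral_const_mul]
    apply intervalIntegral.integral_mono_on ht.1 (hint2 t ht)
      ((hint t ht).const_mul _)
    intro x hx
    have hx' : x ∈ Ico (0:ℝ) 1 := hIcc ht hx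
    have := hmono hx' ht hx.2
    nlinarith [hf'0 x hx']
  -- I2
  have hI2 : ∀ t₀ ∈ Ico (0:ℝ) 1, ∀ t ∈ Ico (0:ℝ) 1, t₀ ≤ t →
      (f t₀ - f 0) * (f' t - f' t₀) ≤
        f' t * (f t - f 0) - ∫ s in (0:ℝ)..t, f' s ^ 2 := by
    intro t₀ ht₀ t ht htt
    have key : f' t * (f t - f 0) - (∫ s in (0:ℝ)..t, f' s ^ 2)
        = ∫ s in (0:ℝ)..t, (f' t * f' s - f' s ^ 2) := by
      rw [← ftc t ht, ← intervalIntegral.integral_const_mul,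
        ← intervalIntegral.integral_sub ((hint t ht).const_mul _) (hint2 t ht)]
    rw [key]
    have hsplit : (∫ s in (0:ℝ)..t, (f' t * f' s - f' s ^ 2))
        = (∫ s in (0:ℝ)..t₀, (f' t * f' s - f' s ^ 2))
          + ∫ s in t₀..t, (f' t * f' s - f' s ^ 2) := by
      rw [intervalIntegral.integral_add_adjacent_intervals]
      · exact ((hint t₀ ht₀).const_mul _).sub (hint2 t₀ ht₀)
      · have : IntervalIntegrable (fun s => f' t * f' s - f' s ^ 2) volume 0 t :=
          ((hint t ht).const_mul _).sub (hint2 t ht)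
        exact this.mono_set (by rw [uIcc_of_le htt, uIcc_of_le ht.1]; exact Icc_subset_Icc ht₀.1 le_rfl)
    rw [hsplit]
    have h2 : 0 ≤ ∫ s in t₀..t, (f' t * f' s - f' s ^ 2) := by
      apply intervalIntegral.integral_nonneg htt
      intro x hx
      have hx' : x ∈ Ico (0:ℝ) 1 := ⟨ht₀.1.trans hx.1, lt_of_le_of_lt hx.2 ht.2⟩
      have := hmono hx' ht hx.2
      nlinarith [hf'0 x hx']
    have h1 : (f t₀ - f 0) * (f' t - f' t₀)
        ≤ ∫ s in (0:ℝ)..t₀, (f' t * f' s - f' s ^ 2) := by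
      rw [← ftc t₀ ht₀, mul_comm, ← intervalIntegral.integral_const_mul]
      apply intervalIntegral.integral_mono_on ht₀.1 ((hint t₀ ht₀).const_mul _)
        (((hint t₀ ht₀).const_mul _).sub (hint2 t₀ ht₀))
      intro x hx
      have hx' : x ∈ Ico (0:ℝ) 1 := hIcc ht₀ hx
      have h3 := hmono hx' ht₀ hx.2
      have h4 := hmono ht₀ ht htt
      nlinarith [hf'0 x hx']
    linarith
  -- main argument
  rw [tendsto_atTop]
  intro M
  set K := max M 0 with hK
  have hK0 : 0 ≤ K := le_max_right _ _
  have hMK : M ≤ K := le_max_left _ _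
  have hIoo : Ioo (0:ℝ) 1 ∈ 𝓝[<] (1:ℝ) :=
    Ioo_mem_nhdsLT_of_mem (by constructor <;> norm_num)
  obtain ⟨t₀, ht₀f, ht₀mem⟩ :=
    ((hblow.eventually_ge_atTop (f 0 + 4*(K + f 0 + 1))).and hIoo).exists
  have ht₀ : t₀ ∈ Ico (0:ℝ) 1 := ⟨ht₀mem.1.le, ht₀mem.2⟩
  have hIoo' : Ioo t₀ 1 ∈ 𝓝[<] (1:ℝ) :=
    Ioo_mem_nhdsLT_of_mem ⟨ht₀mem.2, le_refl 1⟩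
  filter_upwards [hblow.eventually_ge_atTop (2 * f 0 + 1),
    hblow.eventually_ge_atTop (f 0 + (2 * f' t₀ + 1)), hIoo'] with t h1 h2 h3
  have ht : t ∈ Ico (0:ℝ) 1 := ⟨ht₀mem.1.le.trans h3.1.le, h3.2⟩
  have ha : 2 * f' t₀ + 1 ≤ f' t := by
    have := hflb t ht; linarith
  have ha0 : 0 < f' t := by have := hf'0 t₀ ht₀; linarith
  have hF0 : 0 < f t := by linarith
  rw [le_div_iff₀ (by positivity)]
  exact stmt12_aux (f' t) (f' t₀) (f t) (f t₀ - f 0) (f 0)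
    (∫ s in (0:ℝ)..t, f' s ^ 2) K M hc (hf'0 t₀ ht₀) hK0 hMK
    (by linarith) ha (by linarith) (hI1 t ht) (hI2 t₀ ht₀ t ht h3.1.le)
end

section
/- Let n ≥ 3 be an integer and p > 0. Define u_p : B₁ → ℝ on the unit ball B₁ ⊂ ℝⁿ by u_p(x) = 1 − |x|^{2/(1+p)}, and set A = (2/(1+p)) (2/(1+p) + n − 2). Then: (i) for every x ∈ B₁ with x ≠ 0, u_p is smooth near x and −Δu_p(x) = A (1 − u_p(x))^{−p}, i.e., u_p solves −Δu = f(u) away from the origin with f(t) = A(1−t)^{−p}, and f′(u_p(x)) = (2p/(1+p)) (2/(1+p) + n − 2) |x|^{−2}; (ii) if n ≥ N(p) := 2 + 4p/(1+p) + 4√(p/(1+p)), then u_p is stable, i.e., (2p/(1+p)) (2/(1+p) + n − 2) ∫_{B₁} ξ(x)² |x|^{−2} dx ≤ ∫_{B₁} |∇ξ(x)|² dx for every ξ ∈ C^∞_c(B₁). -/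
/-!
Away from the origin everything is explicit: `Δ ‖x‖ ^ a = a (a + n - 2) ‖x‖ ^ (a - 2)`, and for
`a = 2 / (1 + p)` one has `‖x‖ ^ (a - 2) = (‖x‖ ^ a) ^ (-p)`.

Stability is Hardy's inequality `((n - 2) / 2) ^ 2 ∫ ξ² / ‖x‖² ≤ ∫ ‖∇ξ‖²`, because `n ≥ N(p)` is
exactly the condition `(2p / (1 + p)) (2 / (1 + p) + n - 2) ≤ ((n - 2) / 2) ^ 2`. For Hardy's
inequality, integrate the divergence of the smooth compactly supported field
`λ ξ² x / (‖x‖² + ε)`, `λ = (n - 2) / 2`: completing the square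
`‖∇ξ + λ ξ x / (‖x‖² + ε)‖² ≥ 0` bounds `‖∇ξ‖² + div` from below by `λ² ξ² / (‖x‖² + ε)`, and
`ε → 0` by dominated convergence.
-/

open MeasureTheory Set Filter Topology Metric

theorem hasFDerivAt_norm_rpow_of_ne_zero {F : Type*} [NormedAddCommGroup F]
    [InnerProductSpace ℝ F] (a : ℝ) {x : F} (hx : x ≠ 0) :
    HasFDerivAt (fun y : F ↦ ‖y‖ ^ a) ((a * ‖x‖ ^ (a - 2)) • innerSL ℝ x) x := by
  convert ((hasStrictFDerivAt_norm_sq x).rpow_const (p := a / 2) (by simp [hx])).hasFDerivAt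
    using 1
  · ext y
    rw [← Real.rpow_natCast_mul (norm_nonneg _)]
    norm_num
    ring_nf
  · rw [← Real.rpow_natCast_mul (norm_nonneg _), ← Nat.cast_smul_eq_nsmul ℝ, smul_smul]
    ring_nf

theorem hardy_pointwise {F : Type*} [NormedAddCommGroup F] [InnerProductSpace ℝ F] (G x : F)
    (s : ℝ) {l ε : ℝ} (hl : 0 ≤ l) (hε : 0 < ε) :
    l ^ 2 * (s ^ 2 / (‖x‖ ^ 2 + ε)) ≤ ‖G‖ ^ 2 + l * ((2 * l + 2) * (s ^ 2 / (‖x‖ ^ 2 + ε)) +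
      (2 * s * inner ℝ G x / (‖x‖ ^ 2 + ε) - s ^ 2 * (2 * ‖x‖ ^ 2) / (‖x‖ ^ 2 + ε) ^ 2)) := by
  obtain ⟨w, hw⟩ : ∃ w, (‖x‖ ^ 2 + ε)⁻¹ = w := ⟨_, rfl⟩
  have hwx : w * (‖x‖ ^ 2 + ε) = 1 := hw ▸ inv_mul_cancel₀ (by positivity)
  have hsq : 0 ≤ ‖G + (l * s * w) • x‖ ^ 2 := sq_nonneg _
  rw [norm_add_sq_real, inner_smul_right, norm_smul, mul_pow, Real.norm_eq_abs, sq_abs] at hsq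
  have hrest : 0 ≤ l * (l + 2) * ε * s ^ 2 * w ^ 2 := by
    have : 0 ≤ w := hw ▸ by positivity
    positivity
  simp only [div_eq_mul_inv, ← inv_pow, hw]
  -- the gap is exactly `‖G + l s w x‖² + l (l + 2) ε s² w²`, as `w ‖x‖² = 1 - ε w`
  linear_combination hsq + hrest + l * (l + 2) * s ^ 2 * w * hwx

theorem stability_coeff_le_hardy_const {p N : ℝ} (hp : 0 ≤ p)
    (hN : 2 + 4 * p / (1 + p) + 4 * Real.sqrt (p / (1 + p)) ≤ N) :
    2 * p / (1 + p) * (2 / (1 + p) + N - 2) ≤ ((N - 2) / 2) ^ 2 := by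
  set s := Real.sqrt (p / (1 + p))
  have hs : 0 ≤ s := Real.sqrt_nonneg _
  have hs2 : s ^ 2 = p / (1 + p) := Real.sq_sqrt (by positivity)
  have h1 : 2 * p / (1 + p) = 2 * s ^ 2 := by rw [hs2]; ring
  have h2 : 2 / (1 + p) = 2 - 2 * s ^ 2 := by rw [hs2]; field_simp; ring
  rw [h1, h2]
  rw [mul_div_assoc, ← hs2] at hN
  nlinarith [mul_nonneg (by linarith : 0 ≤ N - 2 - 4 * s ^ 2 - 4 * s)
    (by linarith : 0 ≤ N - 2 - 4 * s ^ 2 + 4 * s)]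

section Euclidean

variable {n : ℕ}

local notation "E" => EuclideanSpace ℝ (Fin n)

theorem lap_const_sub (c : ℝ) (u : E → ℝ) (x : E) :
    lap (fun y ↦ c - u y) x = -lap u x := by
  simp only [lap, fderiv_const_sub, neg_apply, fderiv_fun_neg,
    Finset.sum_neg_distrib]

theorem lap_norm_rpow (a : ℝ) {x : E} (hx : x ≠ 0) :
    lap (fun y : E ↦ ‖y‖ ^ a) x = a * (a + n - 2) * ‖x‖ ^ (a - 2) := by
  have hpartial (i : Fin n) :
      (fun y ↦ fderiv ℝ (fun y : E ↦ ‖y‖ ^ a) y (EuclideanSpace.single i 1))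
        =ᶠ[𝓝 x] fun y ↦ a * ‖y‖ ^ (a - 2) * y i := by
    filter_upwards [isOpen_compl_singleton.mem_nhds hx] with y hy
    rw [(hasFDerivAt_norm_rpow_of_ne_zero a hy).fderiv]
    simp [EuclideanSpace.inner_single_right]
  have hsecond (i : Fin n) : fderiv ℝ (fun y : E ↦ a * ‖y‖ ^ (a - 2) * y i) x
      (EuclideanSpace.single i 1) =
        a * ((a - 2) * ‖x‖ ^ (a - 2 - 2) * x i ^ 2 + ‖x‖ ^ (a - 2)) := by
    have : HasFDerivAt (fun y : E ↦ a * ‖y‖ ^ (a - 2) * y i) _ x :=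
      ((hasFDerivAt_norm_rpow_of_ne_zero (a - 2) hx).const_mul a).fun_mul
        (EuclideanSpace.proj (𝕜 := ℝ) i).hasFDerivAt
    rw [this.fderiv]
    simp [EuclideanSpace.inner_single_right]
    ring
  have hpow : ‖x‖ ^ (a - 2 - 2) * ‖x‖ ^ 2 = ‖x‖ ^ (a - 2) := by
    rw [← Real.rpow_natCast, ← Real.rpow_add (norm_pos_iff.2 hx)]
    norm_num
  rw [lap, Finset.sum_congr rfl fun i _ ↦ by rw [(hpartial i).fderiv_eq, hsecond i],
    ← Finset.mul_sum, Finset.sum_add_distrib, ← Finset.mul_sum,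
    ← EuclideanSpace.real_norm_sq_eq, Finset.sum_const, Finset.card_univ, Fintype.card_fin,
    nsmul_eq_mul]
  linear_combination a * (a - 2) * hpow

-- `∫ div (ρ x) = 0`, written out as `div (ρ x) = n ρ + Dρ(x) x`
theorem integral_fderiv_apply_self {ρ : E → ℝ} (hρ : ContDiff ℝ 1 ρ)
    (hcs : HasCompactSupport ρ) :
    ∫ x, fderiv ℝ ρ x x = -n * ∫ x, ρ x := by
  have hdiff : Differentiable ℝ ρ := hρ.differentiable one_ne_zero
  have hcont : Continuous fun x ↦ fderiv ℝ ρ x := hρ.continuous_fderiv one_ne_zero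
  have hint (i : Fin n) :
      Integrable fun x : E ↦ x i * fderiv ℝ ρ x (EuclideanSpace.single i 1) :=
    ((EuclideanSpace.proj (𝕜 := ℝ) i).continuous.mul (hcont.clm_apply continuous_const))
      |>.integrable_of_hasCompactSupport (hcs.fderiv_apply ℝ _).mul_left
  have hcoord (i : Fin n) :
      ∫ x : E, x i * fderiv ℝ ρ x (EuclideanSpace.single i 1) = -∫ x, ρ x := by
    have hproj (x : E) : fderiv ℝ (fun x : E ↦ x i) x = EuclideanSpace.proj i :=
      (EuclideanSpace.proj (𝕜 := ℝ) i).hasFDerivAt.fderiv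
    rw [integral_mul_fderiv_eq_neg_fderiv_mul_of_integrable]
    · simp [hproj]
    · simpa [hproj] using hρ.continuous.integrable_of_hasCompactSupport hcs
    · exact hint i
    · exact ((EuclideanSpace.proj (𝕜 := ℝ) i).continuous.mul hρ.continuous)
        |>.integrable_of_hasCompactSupport hcs.mul_left
    · exact fun x _ ↦ (EuclideanSpace.proj (𝕜 := ℝ) i).differentiableAt
    · exact fun x _ ↦ hdiff x
  have hsplit (x : E) :
      fderiv ℝ ρ x x = ∑ i, x i * fderiv ℝ ρ x (EuclideanSpace.single i 1) := by
    conv_lhs => arg 2; rw [← (EuclideanSpace.basisFun (Fin n) ℝ).sum_repr x]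
    simp
  simp_rw [hsplit]
  rw [integral_finsetSum _ fun i _ ↦ hint i]
  simp [hcoord]

theorem fderiv_sq_div_norm_sq_add_apply_self {ξ : E → ℝ} (hξ : Differentiable ℝ ξ) {ε : ℝ}
    (hε : 0 < ε) (x : E) :
    fderiv ℝ (fun y ↦ ξ y ^ 2 / (‖y‖ ^ 2 + ε)) x x =
      2 * ξ x * inner ℝ (gradient ξ x) x / (‖x‖ ^ 2 + ε) -
        ξ x ^ 2 * (2 * ‖x‖ ^ 2) / (‖x‖ ^ 2 + ε) ^ 2 := by
  have hd : HasFDerivAt (fun y : E ↦ (‖y‖ ^ 2 + ε)⁻¹) _ x :=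
    (hasDerivAt_inv (by positivity)).comp_hasFDerivAt x
      ((hasStrictFDerivAt_norm_sq x).hasFDerivAt.add_const ε)
  simp only [div_eq_mul_inv]
  rw [(((hξ x).hasFDerivAt.pow 2).fun_mul hd).fderiv, inner_gradient_left]
  simp
  field_simp
  ring

theorem integrable_norm_gradient_sq {ξ : E → ℝ} (hξ : ContDiff ℝ 1 ξ)
    (hcs : HasCompactSupport ξ) :
    Integrable fun x ↦ ‖gradient ξ x‖ ^ 2 := by
  have hnorm (x : E) : ‖gradient ξ x‖ = ‖fderiv ℝ ξ x‖ := by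
    rw [gradient]
    exact (InnerProductSpace.toDual ℝ E).symm.norm_map _
  simp only [hnorm]
  have hsupp : HasCompactSupport fun x ↦ ‖fderiv ℝ ξ x‖ ^ 2 :=
    (hcs.fderiv ℝ).comp_left (g := fun L ↦ ‖L‖ ^ 2) (by simp)
  exact ((hξ.continuous_fderiv one_ne_zero).norm.pow 2).integrable_of_hasCompactSupport hsupp

theorem hardy_regularized (hn : 2 ≤ n) {ξ : E → ℝ} (hξ : ContDiff ℝ 1 ξ)
    (hcs : HasCompactSupport ξ) {ε : ℝ} (hε : 0 < ε) :
    ((n - 2) / 2) ^ 2 * ∫ x, ξ x ^ 2 / (‖x‖ ^ 2 + ε) ≤ ∫ x, ‖gradient ξ x‖ ^ 2 := by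
  set l : ℝ := (n - 2) / 2
  have hl : 0 ≤ l := by
    have : (2 : ℝ) ≤ n := by exact_mod_cast hn
    simp only [l]
    linarith
  set ρ : E → ℝ := fun y ↦ ξ y ^ 2 / (‖y‖ ^ 2 + ε)
  have hρ : ContDiff ℝ 1 ρ :=
    (hξ.pow 2).div (contDiff_norm_sq ℝ |>.add contDiff_const) fun y ↦ by positivity
  have hρcs : HasCompactSupport ρ :=
    hcs.mono <| Function.support_subset_iff'.2 fun y hy ↦ by
      simp [ρ, Function.notMem_support.1 hy]
  have hρint : Integrable ρ := hρ.continuous.integrable_of_hasCompactSupport hρcs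
  have hDρint : Integrable fun x ↦ fderiv ℝ ρ x x :=
    (hρ.continuous_fderiv one_ne_zero).clm_apply continuous_id |>.integrable_of_hasCompactSupport <|
      (hρcs.fderiv ℝ).mono <| Function.support_subset_iff'.2 fun y hy ↦ by
        simp [Function.notMem_support.1 hy]
  have hdivint : Integrable fun x ↦ l * (n * ρ x + fderiv ℝ ρ x x) :=
    ((hρint.const_mul _).add hDρint).const_mul _
  have hpt (x : E) : l ^ 2 * ρ x ≤ ‖gradient ξ x‖ ^ 2 + l * (n * ρ x + fderiv ℝ ρ x x) := by
    rw [fderiv_sq_div_norm_sq_add_apply_self (hξ.differentiable one_ne_zero) hε,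
      show (n : ℝ) = 2 * l + 2 by simp only [l]; ring]
    exact hardy_pointwise _ _ _ hl hε
  calc l ^ 2 * ∫ x, ρ x = ∫ x, l ^ 2 * ρ x := (integral_const_mul _ _).symm
    _ ≤ ∫ x, ‖gradient ξ x‖ ^ 2 + l * (n * ρ x + fderiv ℝ ρ x x) :=
      integral_mono (hρint.const_mul _) ((integrable_norm_gradient_sq hξ hcs).add hdivint) hpt
    _ = ∫ x, ‖gradient ξ x‖ ^ 2 := by
      rw [integral_add (integrable_norm_gradient_sq hξ hcs) hdivint, integral_const_mul,
        integral_add (hρint.const_mul _) hDρint, integral_const_mul,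
        integral_fderiv_apply_self hρ hρcs]
      ring

theorem hardy_inequality (hn : 2 ≤ n) {ξ : E → ℝ} (hξ : ContDiff ℝ 1 ξ)
    (hcs : HasCompactSupport ξ) :
    ((n - 2) / 2) ^ 2 * ∫ x, ξ x ^ 2 / ‖x‖ ^ 2 ≤ ∫ x, ‖gradient ξ x‖ ^ 2 := by
  -- a non-integrable `ξ² / ‖x‖²` has Bochner integral `0`
  by_cases hint : Integrable fun x ↦ ξ x ^ 2 / ‖x‖ ^ 2
  swap
  · rw [integral_undef hint, mul_zero]
    exact integral_nonneg fun x ↦ by positivity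
  have : Nontrivial E := by
    obtain ⟨m, rfl⟩ : ∃ m, n = m + 1 := ⟨n - 1, by omega⟩
    infer_instance
  set ε : ℕ → ℝ := fun k ↦ 1 / ((k : ℝ) + 1)
  have hε (k : ℕ) : 0 < ε k := by positivity
  have hlim : Tendsto (fun k ↦ ∫ x, ξ x ^ 2 / (‖x‖ ^ 2 + ε k)) atTop
      (𝓝 (∫ x, ξ x ^ 2 / ‖x‖ ^ 2)) := by
    refine tendsto_integral_of_dominated_convergence _ (fun k ↦ ?_) hint (fun k ↦ ?_) ?_
    · exact (((hξ.continuous.pow 2).div (continuous_norm.pow 2 |>.add continuous_const))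
        fun x ↦ (by positivity : ‖x‖ ^ 2 + ε k ≠ 0)).aestronglyMeasurable
    · filter_upwards [Measure.ae_ne volume 0] with x hx
      rw [Real.norm_of_nonneg (by positivity)]
      exact div_le_div_of_nonneg_left (by positivity) (by positivity) (by linarith [hε k])
    · filter_upwards [Measure.ae_ne volume 0] with x hx
      have h := (tendsto_const_nhds (x := ξ x ^ 2)).div
        (tendsto_one_div_add_atTop_nhds_zero_nat.const_add (‖x‖ ^ 2)) (by simpa using hx)
      rwa [add_zero] at h
  exact le_of_tendsto' (hlim.const_mul _) fun k ↦ hardy_regularized hn hξ hcs (hε k)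

theorem hardy_inequality_of_tsupport_subset (hn : 2 ≤ n) {ξ : E → ℝ} (hξ : ContDiff ℝ 1 ξ)
    (hcs : HasCompactSupport ξ) {s : Set E} (hs : tsupport ξ ⊆ s) :
    ((n - 2) / 2) ^ 2 * ∫ x in s, ξ x ^ 2 / ‖x‖ ^ 2 ≤ ∫ x in s, ‖gradient ξ x‖ ^ 2 := by
  have hout : ∀ x ∉ s, x ∉ tsupport ξ := fun x hx hx' ↦ hx (hs hx')
  rw [setIntegral_eq_integral_of_forall_compl_eq_zero fun x hx ↦ by
      simp [image_eq_zero_of_notMem_tsupport (hout x hx)],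
    setIntegral_eq_integral_of_forall_compl_eq_zero fun x hx ↦ by
      simp [gradient, fderiv_of_notMem_tsupport ℝ (hout x hx)]]
  exact hardy_inequality hn hξ hcs

end Euclidean

theorem stmt19_general (n : ℕ) (p : ℝ) (hp : 0 < p) :
    (∀ x ∈ ball (0 : EuclideanSpace ℝ (Fin n)) 1, x ≠ 0 →
      ContDiffAt ℝ (⊤:ℕ∞) (fun y : EuclideanSpace ℝ (Fin n) => 1 - ‖y‖ ^ (2 / (1 + p))) x ∧
      -lap (fun y : EuclideanSpace ℝ (Fin n) => 1 - ‖y‖ ^ (2 / (1 + p))) x =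
        (2 / (1 + p)) * (2 / (1 + p) + (n:ℝ) - 2) *
          (1 - (1 - ‖x‖ ^ (2 / (1 + p)))) ^ (-p) ∧
      (2 / (1 + p)) * (2 / (1 + p) + (n:ℝ) - 2) * p *
          (1 - (1 - ‖x‖ ^ (2 / (1 + p)))) ^ (-(p + 1)) =
        (2 * p / (1 + p)) * (2 / (1 + p) + (n:ℝ) - 2) * ‖x‖ ^ (-(2:ℝ))) ∧
    (2 + 4 * p / (1 + p) + 4 * Real.sqrt (p / (1 + p)) ≤ (n:ℝ) →
      ∀ ξ : EuclideanSpace ℝ (Fin n) → ℝ, ContDiff ℝ (⊤:ℕ∞) ξ → HasCompactSupport ξ →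
        tsupport ξ ⊆ ball (0 : EuclideanSpace ℝ (Fin n)) 1 →
        (2 * p / (1 + p)) * (2 / (1 + p) + (n:ℝ) - 2) *
            ∫ x in ball (0 : EuclideanSpace ℝ (Fin n)) 1, ξ x ^ 2 * ‖x‖ ^ (-(2:ℝ)) ≤
          ∫ x in ball (0 : EuclideanSpace ℝ (Fin n)) 1, ‖gradient ξ x‖ ^ 2) := by
  refine ⟨fun x _ hx ↦ ⟨?_, ?_, ?_⟩, fun hN ξ hξ hcs hsupp ↦ ?_⟩
  · exact contDiffAt_const.sub
      ((contDiffAt_id.norm ℝ hx).rpow_const_of_ne (norm_ne_zero_iff.2 hx))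
  · rw [lap_const_sub, neg_neg, lap_norm_rpow _ hx, sub_sub_cancel,
      ← Real.rpow_mul (norm_nonneg x)]
    congr 2
    field_simp
    ring
  · rw [sub_sub_cancel, ← Real.rpow_mul (norm_nonneg x),
      show 2 / (1 + p) * -(p + 1) = -2 by field_simp; ring]
    ring
  · have hn : 2 ≤ n := by
      have : 0 ≤ 4 * p / (1 + p) := by positivity
      exact_mod_cast (by linarith [Real.sqrt_nonneg (p / (1 + p))] : (2 : ℝ) ≤ n)
    have hkernel (x : EuclideanSpace ℝ (Fin n)) :
        ξ x ^ 2 * ‖x‖ ^ (-(2:ℝ)) = ξ x ^ 2 / ‖x‖ ^ 2 := by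
      rw [Real.rpow_neg (norm_nonneg x), Real.rpow_two, div_eq_mul_inv]
    simp only [hkernel]
    calc _ ≤ ((n - 2) / 2) ^ 2 * ∫ x in ball (0 : EuclideanSpace ℝ (Fin n)) 1, ξ x ^ 2 / ‖x‖ ^ 2 :=
          mul_le_mul_of_nonneg_right (stability_coeff_le_hardy_const hp.le hN)
            (integral_nonneg fun x ↦ by positivity)
      _ ≤ _ := hardy_inequality_of_tsupport_subset hn (hξ.of_le (by simp)) hcs hsupp

/-- The explicit singular solution `u_p(x) = 1 - |x|^{2/(1+p)}` in `B₁ ⊂ ℝⁿ`,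
`n ≥ 3`, `p > 0`, with `A = (2/(1+p))(2/(1+p)+n-2)`:
(i) away from the origin `u_p` is smooth and solves `-Δu_p = A(1-u_p)^{-p}`, with
`f'(u_p(x)) = A·p·(1-u_p(x))^{-p-1} = (2p/(1+p))(2/(1+p)+n-2)|x|^{-2}`;
(ii) if `n ≥ N(p) = 2 + 4p/(1+p) + 4√(p/(1+p))`, then `u_p` is stable, i.e.
`(2p/(1+p))(2/(1+p)+n-2) ∫_{B₁} ξ²|x|^{-2} ≤ ∫_{B₁} |∇ξ|²` for all `ξ ∈ C^∞_c(B₁)`. -/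
theorem stmt19 (n : ℕ) (hn : 3 ≤ n) (p : ℝ) (hp : 0 < p) :
    (∀ x ∈ ball (0 : EuclideanSpace ℝ (Fin n)) 1, x ≠ 0 →
      ContDiffAt ℝ (⊤:ℕ∞) (fun y : EuclideanSpace ℝ (Fin n) => 1 - ‖y‖ ^ (2 / (1 + p))) x ∧
      -lap (fun y : EuclideanSpace ℝ (Fin n) => 1 - ‖y‖ ^ (2 / (1 + p))) x =
        (2 / (1 + p)) * (2 / (1 + p) + (n:ℝ) - 2) *
          (1 - (1 - ‖x‖ ^ (2 / (1 + p)))) ^ (-p) ∧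
      (2 / (1 + p)) * (2 / (1 + p) + (n:ℝ) - 2) * p *
          (1 - (1 - ‖x‖ ^ (2 / (1 + p)))) ^ (-(p + 1)) =
        (2 * p / (1 + p)) * (2 / (1 + p) + (n:ℝ) - 2) * ‖x‖ ^ (-(2:ℝ))) ∧
    (2 + 4 * p / (1 + p) + 4 * Real.sqrt (p / (1 + p)) ≤ (n:ℝ) →
      ∀ ξ : EuclideanSpace ℝ (Fin n) → ℝ, ContDiff ℝ (⊤:ℕ∞) ξ → HasCompactSupport ξ →
        tsupport ξ ⊆ ball (0 : EuclideanSpace ℝ (Fin n)) 1 →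
        (2 * p / (1 + p)) * (2 / (1 + p) + (n:ℝ) - 2) *
            ∫ x in ball (0 : EuclideanSpace ℝ (Fin n)) 1, ξ x ^ 2 * ‖x‖ ^ (-(2:ℝ)) ≤
          ∫ x in ball (0 : EuclideanSpace ℝ (Fin n)) 1, ‖gradient ξ x‖ ^ 2) :=
  stmt19_general n p hp
end
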